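/- arXiv:0710.5419 — 7 statements merged into one kernel-verified Lean document; each statement's English description precedes it below -/
import Mathlib

section
/- Let X be a real random variable with the centered Gaussian distribution N(0, v) for some variance v > 0. Then E(ln|X|) = (1/2)(ln v − ln 2 − γ), where γ is the Euler–Mascheroni constant. Equivalently, ∫_ℝ ln|x| dN(0,v)(x) = (ln v − ln 2 − γ)/2. -/
/-!
On `(0, ∞)` the substitution `t = x² / (2v)` turns `E log |X|` into a combination of
`Γ(1/2) = √π` and `Γ'(1/2) = ∫ t^(-1/2) log t e^(-t) dt = -√π (γ + 2 log 2)`.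
-/

open MeasureTheory ProbabilityTheory Real Set Topology

namespace Real

theorem hasDerivAt_Gamma_integral {s : ℝ} (hs : 0 < s) :
    HasDerivAt Gamma (∫ t in Ioi 0, t ^ (s - 1) * (log t * exp (-t))) s := by
  have hs' : 0 < (s : ℂ).re := by simpa using hs
  have hGamma : Complex.Gamma =ᶠ[𝓝 (s : ℂ)] Complex.GammaIntegral := by
    filter_upwards [(isOpen_lt continuous_const Complex.continuous_re).mem_nhds hs']
      with z hz using Complex.Gamma_eq_integral hz
  have hint : ∫ t : ℝ in Ioi 0, (t : ℂ) ^ ((s : ℂ) - 1) * ((log t : ℂ) * (exp (-t) : ℂ))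
      = ((∫ t in Ioi 0, t ^ (s - 1) * (log t * exp (-t)) : ℝ) : ℂ) := by
    rw [← integral_complex_ofReal]
    refine setIntegral_congr_fun measurableSet_Ioi fun t ht => ?_
    push_cast [Complex.ofReal_cpow (le_of_lt ht)]
    rfl
  have := ((Complex.hasDerivAt_GammaIntegral hs').congr_of_eventuallyEq hGamma).real_of_complex
  have hre : (fun x : ℝ => (Complex.Gamma x).re) = Gamma :=
    funext fun x => by rw [Complex.Gamma_ofReal, Complex.ofReal_re]
  rwa [hint, Complex.ofReal_re, hre] at this

theorem integral_rpow_neg_half_mul_log_mul_exp_neg :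
    ∫ t in Ioi 0, t ^ (-(1 / 2) : ℝ) * (log t * exp (-t))
      = -√π * (eulerMascheroniConstant + 2 * log 2) := by
  have h := (hasDerivAt_Gamma_integral one_half_pos).unique hasDerivAt_Gamma_one_half
  norm_num at h
  rwa [neg_mul]

end Real

theorem integral_comp_mul_sq_Ioi {E : Type*} [NormedAddCommGroup E] [NormedSpace ℝ E]
    (g : ℝ → E) {b : ℝ} (hb : 0 < b) :
    ∫ x in Ioi 0, g (b * x ^ 2) = (2 * √b)⁻¹ • ∫ t in Ioi 0, t ^ (-(1 / 2) : ℝ) • g t := by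
  have hsqrt : ∫ x in Ioi 0, g (b * x ^ 2)
      = ∫ y in Ioi 0, ((1 / 2) * y ^ (-(1 / 2) : ℝ)) • g (b * y) := by
    rw [← integral_comp_rpow_Ioi_of_pos (p := 1 / 2) one_half_pos]
    refine setIntegral_congr_fun measurableSet_Ioi fun y hy => ?_
    rw [← rpow_natCast, ← rpow_mul (le_of_lt hy)]
    norm_num
  have hscale :=
    integral_comp_mul_left_Ioi (fun t => ((1 / 2) * (b⁻¹ * t) ^ (-(1 / 2) : ℝ)) • g t) 0 hb
  simp only [inv_mul_cancel_left₀ hb.ne', mul_zero] at hscale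
  rw [hsqrt, hscale]
  have hfactor : ∀ t ∈ Ioi (0 : ℝ), (1 / 2 * (b⁻¹ * t) ^ (-(1 / 2) : ℝ)) • g t
      = (√b / 2) • t ^ (-(1 / 2) : ℝ) • g t := by
    intro t ht
    rw [smul_smul, mul_rpow (inv_nonneg.2 hb.le) (le_of_lt ht), inv_rpow hb.le, ← rpow_neg hb.le,
      neg_neg, ← sqrt_eq_rpow]
    ring_nf
  rw [setIntegral_congr_fun measurableSet_Ioi hfactor, integral_smul, smul_smul]
  congr 1
  have hb' : 0 < √b := sqrt_pos.2 hb
  field_simp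
  rw [sq_sqrt hb.le]

theorem integral_log_mul_exp_neg_mul_sq {b : ℝ} (hb : 0 < b) :
    ∫ x in Ioi 0, log x * exp (-b * x ^ 2)
      = -(√π / (4 * √b)) * (eulerMascheroniConstant + 2 * log 2 + log b) := by
  set I₁ := fun t : ℝ => t ^ (-(1 / 2) : ℝ) * (log t * exp (-t))
  set I₀ := fun t : ℝ => t ^ (-(1 / 2) : ℝ) * exp (-t)
  -- a non-integrable function would have integral `0`, but this one integrates to `Γ'(1/2) ≠ 0`
  have hI₁ : IntegrableOn I₁ (Ioi 0) := by
    refine Integrable.of_integral_ne_zero ?_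
    rw [integral_rpow_neg_half_mul_log_mul_exp_neg]
    have := one_half_lt_eulerMascheroniConstant
    have := log_pos one_lt_two
    have := sqrt_pos.2 pi_pos
    nlinarith
  have hhalf : (1 / 2 : ℝ) - 1 = -(1 / 2) := by norm_num
  have hI₀ : IntegrableOn I₀ (Ioi 0) := by
    simpa only [I₀, mul_comm, hhalf] using GammaIntegral_convergent one_half_pos
  have hI₀_eq : ∫ t in Ioi 0, I₀ t = √π := by
    simp only [I₀, mul_comm _ (exp _), ← hhalf, ← Gamma_eq_integral one_half_pos, Gamma_one_half_eq]
  have hsubst : ∀ x ∈ Ioi (0 : ℝ),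
      log x * exp (-b * x ^ 2) = (fun t => (log t - log b) / 2 * exp (-t)) (b * x ^ 2) := by
    intro x hx
    beta_reduce
    rw [log_mul hb.ne' (pow_ne_zero 2 (ne_of_gt hx)), log_pow]
    ring_nf
  have hsplit : ∀ t : ℝ, t ^ (-(1 / 2) : ℝ) • ((log t - log b) / 2 * exp (-t))
      = 1 / 2 * I₁ t - log b / 2 * I₀ t := by
    intro t; simp only [I₁, I₀, smul_eq_mul]; ring
  rw [setIntegral_congr_fun measurableSet_Ioi hsubst,
    integral_comp_mul_sq_Ioi (fun t => (log t - log b) / 2 * exp (-t)) hb,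
    integral_congr_ae (ae_of_all _ hsplit), integral_sub (hI₁.const_mul _) (hI₀.const_mul _),
    integral_const_mul, integral_const_mul, integral_rpow_neg_half_mul_log_mul_exp_neg, hI₀_eq,
    smul_eq_mul]
  have hb' : 0 < √b := sqrt_pos.2 hb
  field_simp
  ring

lemma gaussianPDFReal_zero_eq (v : NNReal) (x : ℝ) :
    gaussianPDFReal 0 v x = (√(2 * π * v))⁻¹ * exp (-(2 * v : ℝ)⁻¹ * x ^ 2) := by
  rw [gaussianPDFReal, sub_zero, neg_div, div_eq_inv_mul, neg_mul]

/-- If `X ~ N(0, v)` with `v > 0`, then `E(ln |X|) = (ln v - ln 2 - γ)/2`. -/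
theorem expectation_log_abs_gaussian (v : NNReal) (hv : 0 < v) :
    ∫ x, Real.log |x| ∂(gaussianReal 0 v)
      = (Real.log v - Real.log 2 - Real.eulerMascheroniConstant) / 2 := by
  have hv' : (0 : ℝ) < v := hv
  set c := (√(2 * π * v))⁻¹ with hc
  calc ∫ x, log |x| ∂gaussianReal 0 v
      = ∫ x, c * (log |x| * exp (-(2 * v : ℝ)⁻¹ * |x| ^ 2)) := by
        rw [integral_gaussianReal_eq_integral_smul hv.ne']
        congr 1 with x
        rw [smul_eq_mul, gaussianPDFReal_zero_eq, sq_abs]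
        ring
    _ = 2 * (c * ∫ x in Ioi 0, log x * exp (-(2 * v : ℝ)⁻¹ * x ^ 2)) := by
        rw [integral_comp_abs (f := fun x => c * (log x * exp (-(2 * v : ℝ)⁻¹ * x ^ 2))),
          integral_const_mul]
    _ = (log v - log 2 - eulerMascheroniConstant) / 2 := by
        rw [integral_log_mul_exp_neg_mul_sq (by positivity), sqrt_inv, log_inv,
          log_mul two_ne_zero hv'.ne', hc, show 2 * π * v = (2 * v) * π by ring,
          sqrt_mul (by positivity)]
        have : 0 < √(2 * v) := sqrt_pos.2 (by positivity)
        have : 0 < √π := sqrt_pos.2 pi_pos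
        field_simp
        ring
end

section
/- Let X be a real random variable with the centered Gaussian distribution N(0, v) for some variance v > 0, and let m_v = (1/2)(ln v − ln 2 − γ). Then Var(ln|X|) = π²/8, i.e., ∫_ℝ (ln|x| − m_v)² dN(0,v)(x) = π²/8. In particular the variance does not depend on v. -/
/-!
If `X ~ N(0, v)`, then `T = X² / (2v)` has density `t^(-1/2) e^(-t) / √π` on `(0, ∞)`, and
`log |X| - m_v = (log T + γ + 2 log 2) / 2`. The moments `∫ t^(s-1) (log t)^k e^(-t) dt` are the
derivatives `Γ^(k)(s)` (differentiate the Mellin transform of `e^(-t)` under the integral), so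
the variance is `(Γ''Γ - Γ'²)(1/2) / (4 Γ(1/2)²)`. Here `Γ'(1/2) = -√π (γ + 2 log 2)` is known,
and differentiating the reflection formula `Γ(z) Γ(1-z) = π / sin(πz)` twice at `z = 1/2` gives
`2 Γ Γ'' - 2 Γ'² = π³` there, whence the value `π³ / (8π) = π² / 8`.
-/

open MeasureTheory ProbabilityTheory Real Set Filter Asymptotics
open scoped Topology NNReal

noncomputable def logPowMulExpNeg (k : ℕ) (t : ℝ) : ℝ := log t ^ k * exp (-t)

lemma logPowMulExpNeg_succ (k : ℕ) :
    logPowMulExpNeg (k + 1) = fun t => log t • logPowMulExpNeg k t := by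
  funext t
  simp only [logPowMulExpNeg, smul_eq_mul, pow_succ]
  ring

lemma continuousOn_logPowMulExpNeg (k : ℕ) : ContinuousOn (logPowMulExpNeg k) (Ioi 0) :=
  ((continuousOn_log.mono fun _ ht => ne_of_gt ht).pow k).mul (by fun_prop)

lemma isBigO_logPowMulExpNeg_atTop (k : ℕ) (a : ℝ) :
    logPowMulExpNeg k =O[atTop] (· ^ (-a)) := by
  induction k generalizing a with
  | zero =>
    have h : logPowMulExpNeg 0 = fun t => exp (-1 * t) := by funext t; simp [logPowMulExpNeg]
    exact h ▸ (isLittleO_exp_neg_mul_rpow_atTop zero_lt_one (-a)).isBigO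
  | succ k ih =>
    rw [logPowMulExpNeg_succ]
    exact isBigO_rpow_top_log_smul (lt_add_one a) (ih (a + 1))

lemma isBigO_logPowMulExpNeg_nhdsGT_zero (k : ℕ) {b : ℝ} (hb : 0 < b) :
    logPowMulExpNeg k =O[𝓝[>] 0] (· ^ (-b)) := by
  induction k generalizing b with
  | zero =>
    refine IsBigO.of_bound 1 ?_
    filter_upwards [Ioo_mem_nhdsGT one_pos] with t ⟨ht0, ht1⟩
    rw [one_mul, norm_of_nonneg (by simp [logPowMulExpNeg]; positivity),
      norm_of_nonneg (by positivity)]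
    calc logPowMulExpNeg 0 t = exp (-t) := by simp [logPowMulExpNeg]
      _ ≤ 1 := exp_le_one_iff.mpr (by linarith)
      _ ≤ t ^ (-b) := one_le_rpow_of_pos_of_le_one_of_nonpos ht0 ht1.le (by linarith)
  | succ k ih =>
    rw [logPowMulExpNeg_succ]
    exact isBigO_rpow_zero_log_smul (half_lt_self hb) (ih (half_pos hb))

lemma hasDerivAt_mellin_logPowMulExpNeg (k : ℕ) {s : ℂ} (hs : 0 < s.re) :
    HasDerivAt (mellin fun t => (logPowMulExpNeg k t : ℂ))
      (mellin (fun t => (logPowMulExpNeg (k + 1) t : ℂ)) s) s := by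
  have hc := Complex.continuous_ofReal.comp_continuousOn (continuousOn_logPowMulExpNeg k)
  have h := (mellin_hasDerivAt_of_isBigO_rpow (f := fun t => (logPowMulExpNeg k t : ℂ))
    (hc.locallyIntegrableOn measurableSet_Ioi)
    (Complex.isBigO_ofReal_left.mpr (isBigO_logPowMulExpNeg_atTop k (s.re + 1))) (lt_add_one _)
    (Complex.isBigO_ofReal_left.mpr (isBigO_logPowMulExpNeg_nhdsGT_zero k (half_pos hs)))
    (half_lt_self hs)).2
  have hsucc : (fun t => (logPowMulExpNeg (k + 1) t : ℂ)) =
      fun t => log t • (logPowMulExpNeg k t : ℂ) := by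
    funext t
    simp [logPowMulExpNeg_succ, Complex.real_smul]
  rwa [hsucc]

lemma integrableOn_rpow_mul_logPowMulExpNeg (k : ℕ) {s : ℝ} (hs : 0 < s) :
    IntegrableOn (fun t => t ^ (s - 1) * logPowMulExpNeg k t) (Ioi 0) :=
  mellin_convergent_of_isBigO_scalar
    ((continuousOn_logPowMulExpNeg k).locallyIntegrableOn measurableSet_Ioi)
    (isBigO_logPowMulExpNeg_atTop k (s + 1)) (lt_add_one s)
    (isBigO_logPowMulExpNeg_nhdsGT_zero k (half_pos hs)) (half_lt_self hs)

lemma isOpen_re_pos : IsOpen {s : ℂ | 0 < s.re} :=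
  isOpen_lt continuous_const Complex.continuous_re

lemma eqOn_iteratedDeriv_Gamma_mellin (k : ℕ) :
    EqOn (iteratedDeriv k Complex.Gamma) (mellin fun t => (logPowMulExpNeg k t : ℂ))
      {s | 0 < s.re} := by
  induction k with
  | zero =>
    intro s hs
    rw [iteratedDeriv_zero, Complex.Gamma_eq_integral hs, Complex.GammaIntegral_eq_mellin]
    simp [logPowMulExpNeg]
  | succ k ih =>
    intro s hs
    rw [iteratedDeriv_succ, (ih.eventuallyEq_of_mem (isOpen_re_pos.mem_nhds hs)).deriv_eq]
    exact (hasDerivAt_mellin_logPowMulExpNeg k hs).deriv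

lemma hasDerivAt_iteratedDeriv_Gamma (k : ℕ) {s : ℂ} (hs : 0 < s.re) :
    HasDerivAt (iteratedDeriv k Complex.Gamma) (iteratedDeriv (k + 1) Complex.Gamma s) s := by
  rw [eqOn_iteratedDeriv_Gamma_mellin (k + 1) hs]
  exact (hasDerivAt_mellin_logPowMulExpNeg k hs).congr_of_eventuallyEq
    ((eqOn_iteratedDeriv_Gamma_mellin k).eventuallyEq_of_mem (isOpen_re_pos.mem_nhds hs))

lemma iteratedDeriv_Gamma_ofReal (k : ℕ) {s : ℝ} (hs : 0 < s) :
    iteratedDeriv k Complex.Gamma s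
      = ((∫ t in Ioi 0, t ^ (s - 1) * logPowMulExpNeg k t : ℝ) : ℂ) := by
  rw [eqOn_iteratedDeriv_Gamma_mellin k (by simpa using hs), mellin, ← integral_complex_ofReal]
  refine setIntegral_congr_fun measurableSet_Ioi fun t ht => ?_
  rw [smul_eq_mul, ← Complex.ofReal_one, ← Complex.ofReal_sub,
    ← Complex.ofReal_cpow (le_of_lt ht), Complex.ofReal_mul]

lemma iteratedDeriv_two_eq_of_hasDerivAt {𝕜 F : Type*} [NontriviallyNormedField 𝕜]
    [NormedAddCommGroup F] [NormedSpace 𝕜 F] {f f' : 𝕜 → F} {f'' : F} {x : 𝕜}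
    (hf : ∀ᶠ y in 𝓝 x, HasDerivAt f (f' y) y) (hf' : HasDerivAt f' f'' x) :
    iteratedDeriv 2 f x = f'' := by
  rw [iteratedDeriv_succ, iteratedDeriv_one]
  exact (hf'.congr_of_eventuallyEq (hf.mono fun _ hy => hy.deriv)).deriv

lemma hasDerivAt_Gamma_of_re_pos {s : ℂ} (hs : 0 < s.re) :
    HasDerivAt Complex.Gamma (deriv Complex.Gamma s) s := by
  simpa using hasDerivAt_iteratedDeriv_Gamma 0 hs

lemma hasDerivAt_deriv_Gamma_of_re_pos {s : ℂ} (hs : 0 < s.re) :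
    HasDerivAt (deriv Complex.Gamma) (iteratedDeriv 2 Complex.Gamma s) s := by
  simpa using hasDerivAt_iteratedDeriv_Gamma 1 hs

lemma mem_integerComplement_of_re_pos_of_re_lt_one {z : ℂ} (h0 : 0 < z.re) (h1 : z.re < 1) :
    z ∈ Complex.integerComplement := by
  rintro ⟨k, rfl⟩
  rw [Complex.intCast_re] at h0 h1
  norm_cast at h0 h1
  omega

lemma hasDerivAt_sin_pi_mul (z : ℂ) :
    HasDerivAt (fun w : ℂ => Complex.sin (π * w)) (π * Complex.cos (π * z)) z := by
  simpa [mul_comm] using ((hasDerivAt_id z).const_mul (π : ℂ)).csin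

lemma hasDerivAt_pi_div_sin_pi_mul {z : ℂ} (hz : Complex.sin (π * z) ≠ 0) :
    HasDerivAt (fun w : ℂ => π / Complex.sin (π * w))
      (-π ^ 2 * Complex.cos (π * z) / Complex.sin (π * z) ^ 2) z :=
  ((hasDerivAt_const z (π : ℂ)).fun_div (hasDerivAt_sin_pi_mul z) hz).congr_deriv (by ring)

lemma hasDerivAt_neg_pi_sq_mul_cos_div_sin_sq {z : ℂ} (hz : Complex.sin (π * z) ≠ 0) :
    HasDerivAt (fun w : ℂ => -π ^ 2 * Complex.cos (π * w) / Complex.sin (π * w) ^ 2)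
      (π ^ 3 * (1 + Complex.cos (π * z) ^ 2) / Complex.sin (π * z) ^ 3) z := by
  have hcos : HasDerivAt (fun w : ℂ => -π ^ 2 * Complex.cos (π * w))
      (-π ^ 2 * (-Complex.sin (π * z) * π)) z :=
    (((hasDerivAt_id z).const_mul (π : ℂ)).ccos.const_mul _).congr_deriv (by simp)
  have hsin_sq : HasDerivAt (fun w : ℂ => Complex.sin (π * w) ^ 2)
      (2 * Complex.sin (π * z) * (π * Complex.cos (π * z))) z :=
    ((hasDerivAt_sin_pi_mul z).pow 2).congr_deriv (by simp)
  refine (hcos.fun_div hsin_sq (pow_ne_zero 2 hz)).congr_deriv ?_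
  field_simp
  linear_combination Complex.sin_sq_add_cos_sq (π * z)

theorem Gamma_mul_Gamma_one_sub_iteratedDeriv_two {z : ℂ} (h0 : 0 < z.re) (h1 : z.re < 1) :
    iteratedDeriv 2 Complex.Gamma z * Complex.Gamma (1 - z)
        - 2 * (deriv Complex.Gamma z * deriv Complex.Gamma (1 - z))
        + Complex.Gamma z * iteratedDeriv 2 Complex.Gamma (1 - z)
      = π ^ 3 * (1 + Complex.cos (π * z) ^ 2) / Complex.sin (π * z) ^ 3 := by
  have hstrip : {w : ℂ | 0 < w.re ∧ w.re < 1} ∈ 𝓝 z :=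
    (isOpen_re_pos.inter (isOpen_lt Complex.continuous_re continuous_const)).mem_nhds ⟨h0, h1⟩
  have hsin : {w : ℂ | Complex.sin (π * w) ≠ 0} ∈ 𝓝 z :=
    (isOpen_ne_fun (by fun_prop) continuous_const).mem_nhds
      (sin_pi_mul_ne_zero (mem_integerComplement_of_re_pos_of_re_lt_one h0 h1))
  have h1z : 0 < (1 - z).re := by simpa using h1
  have hLeft := iteratedDeriv_two_eq_of_hasDerivAt
    (f := fun w => Complex.Gamma w * Complex.Gamma (1 - w))
    (f' := fun w => deriv Complex.Gamma w * Complex.Gamma (1 - w)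
      - Complex.Gamma w * deriv Complex.Gamma (1 - w))
    (Filter.mem_of_superset hstrip fun w hw => by
      have h1w : 0 < (1 - w).re := by simpa using hw.2
      exact ((hasDerivAt_Gamma_of_re_pos hw.1).mul
        ((hasDerivAt_Gamma_of_re_pos h1w).comp_const_sub 1 w)).congr_deriv (by ring))
    (((hasDerivAt_deriv_Gamma_of_re_pos h0).mul
        ((hasDerivAt_Gamma_of_re_pos h1z).comp_const_sub 1 z)).sub
      ((hasDerivAt_Gamma_of_re_pos h0).mul
        ((hasDerivAt_deriv_Gamma_of_re_pos h1z).comp_const_sub 1 z)))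
  have hRight := iteratedDeriv_two_eq_of_hasDerivAt
    (Filter.mem_of_superset hsin fun w hw => hasDerivAt_pi_div_sin_pi_mul hw)
    (hasDerivAt_neg_pi_sq_mul_cos_div_sin_sq (sin_pi_mul_ne_zero
      (mem_integerComplement_of_re_pos_of_re_lt_one h0 h1)))
  simp_rw [Complex.Gamma_mul_Gamma_one_sub] at hLeft
  rw [← hRight, hLeft]
  ring

lemma integral_gaussianReal_comp_abs {v : ℝ≥0} (hv : v ≠ 0) (f : ℝ → ℝ) :
    ∫ x, f |x| ∂gaussianReal 0 v
      = (√π)⁻¹ * ∫ t in Ioi 0, t ^ (-(1 / 2) : ℝ) * exp (-t) * f √(2 * v * t) := by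
  have h2v : (0 : ℝ) < 2 * v := by positivity
  set g : ℝ → ℝ := fun y => gaussianPDFReal 0 v y * f y
  calc ∫ x, f |x| ∂gaussianReal 0 v = ∫ x, g |x| := by
        rw [integral_gaussianReal_eq_integral_smul hv]
        simp [g, gaussianPDFReal, sq_abs]
    _ = 2 * ∫ y in Ioi 0, g y := integral_comp_abs
    _ = 2 * ∫ u in Ioi 0, (|1 / 2| * u ^ ((1 / 2 : ℝ) - 1)) • g (u ^ (1 / 2 : ℝ)) := by
        rw [integral_comp_rpow_Ioi g one_half_pos.ne']
    _ = 2 * ((2 * v : ℝ) • ∫ t : ℝ in Ioi 0,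
          (|1 / 2| * (2 * v * t) ^ ((1 / 2 : ℝ) - 1)) • g ((2 * v * t) ^ (1 / 2 : ℝ))) := by
        rw [integral_comp_mul_left_Ioi' (fun u => (|1 / 2| * u ^ ((1 / 2 : ℝ) - 1)) •
          g (u ^ (1 / 2 : ℝ))) 0 h2v, mul_zero]
    _ = _ := by
        rw [smul_eq_mul, ← mul_assoc, ← integral_const_mul, ← integral_const_mul]
        refine setIntegral_congr_fun measurableSet_Ioi fun t (ht : 0 < t) => ?_
        have h2vt : 0 < 2 * v * t := by positivity
        have hexp : -(√(2 * v * t) - 0) ^ 2 / (2 * v) = -t := by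
          rw [sub_zero, sq_sqrt h2vt.le]
          field_simp
        have hrpow : (2 * v * t) ^ ((1 / 2 : ℝ) - 1) = (√(2 * v * t))⁻¹ := by
          rw [sqrt_eq_rpow, ← rpow_neg h2vt.le]
          norm_num
        have ht' : t ^ (-(1 / 2) : ℝ) = (√t)⁻¹ := by rw [sqrt_eq_rpow, ← rpow_neg ht.le]
        rw [← sqrt_eq_rpow, hrpow, ht']
        simp only [g, gaussianPDFReal, smul_eq_mul, hexp]
        rw [sqrt_mul h2v.le t, show 2 * π * v = π * (2 * v) by ring, sqrt_mul pi_pos.le]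
        field_simp
        rw [sq_sqrt h2v.le, abs_of_pos one_half_pos]
        ring

lemma Gamma_mul_iteratedDeriv_two_Gamma_one_half :
    2 * Complex.Gamma (1 / 2) * iteratedDeriv 2 Complex.Gamma (1 / 2)
      - 2 * deriv Complex.Gamma (1 / 2) ^ 2 = π ^ 3 := by
  have h := Gamma_mul_Gamma_one_sub_iteratedDeriv_two (z := 1 / 2) (by norm_num) (by norm_num)
  rw [show (1 : ℂ) - 1 / 2 = 1 / 2 by norm_num, mul_one_div, Complex.sin_pi_div_two,
    Complex.cos_pi_div_two] at h
  linear_combination h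

lemma integral_rpow_neg_half_mul_sq_log_add_mul_exp_neg :
    ∫ t in Ioi 0, t ^ (-(1 / 2) : ℝ) * ((log t + (eulerMascheroniConstant + 2 * log 2)) ^ 2
      * exp (-t)) = √π * π ^ 2 / 2 := by
  set c := eulerMascheroniConstant + 2 * log 2
  set M : ℕ → ℝ := fun k => ∫ t in Ioi 0, t ^ ((1 / 2 : ℝ) - 1) * logPowMulExpNeg k t
    with hM
  have hM_eq (k : ℕ) : iteratedDeriv k Complex.Gamma (1 / 2) = M k := by
    rw [← iteratedDeriv_Gamma_ofReal k one_half_pos]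
    norm_num
  have hM0 : M 0 = √π := by
    rw [← Real.Gamma_one_half_eq, ← Complex.ofReal_inj, ← hM_eq, iteratedDeriv_zero,
      ← Complex.Gamma_ofReal]
    norm_num
  have hM1 : M 1 = -√π * c := by
    have h := hM_eq 1
    rw [iteratedDeriv_one, Complex.hasDerivAt_Gamma_one_half.deriv] at h
    exact_mod_cast h.symm
  have hM2 : 2 * M 0 * M 2 - 2 * M 1 ^ 2 = π ^ 3 := by
    have h := Gamma_mul_iteratedDeriv_two_Gamma_one_half
    rw [hM_eq 2, ← iteratedDeriv_one, hM_eq 1, ← iteratedDeriv_zero (f := Complex.Gamma),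
      hM_eq 0] at h
    exact_mod_cast h
  have hintegrable (k : ℕ) := integrableOn_rpow_mul_logPowMulExpNeg k one_half_pos
  calc ∫ t in Ioi 0, t ^ (-(1 / 2) : ℝ) * ((log t + c) ^ 2 * exp (-t))
      = ∫ t in Ioi 0, t ^ ((1 / 2 : ℝ) - 1) * logPowMulExpNeg 2 t
          + 2 * c * (t ^ ((1 / 2 : ℝ) - 1) * logPowMulExpNeg 1 t)
          + c ^ 2 * (t ^ ((1 / 2 : ℝ) - 1) * logPowMulExpNeg 0 t) := by
        refine integral_congr_ae (ae_of_all _ fun t => ?_)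
        simp only [logPowMulExpNeg]
        norm_num
        ring
    _ = M 2 + 2 * c * M 1 + c ^ 2 * M 0 := by
        simp only [hM]
        rw [← integral_const_mul, ← integral_const_mul,
          ← integral_add (hintegrable 2) ((hintegrable 1).const_mul _)]
        exact integral_add ((hintegrable 2).add ((hintegrable 1).const_mul _))
          ((hintegrable 0).const_mul _)
    _ = √π * π ^ 2 / 2 := by
        have hpi : √π * √π = π := mul_self_sqrt pi_pos.le
        rw [hM0, hM1] at hM2 ⊢
        refine mul_left_cancel₀ (sqrt_pos.mpr pi_pos).ne' ?_
        linear_combination hM2 / 2 - π ^ 2 / 2 * hpi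

/-- If `X ~ N(0, v)` with `v > 0`, then `Var(ln |X|) = π²/8`, independently of `v`. -/
theorem variance_log_abs_gaussian (v : NNReal) (hv : 0 < v) :
    ∫ x, (Real.log |x|
        - (Real.log v - Real.log 2 - Real.eulerMascheroniConstant) / 2) ^ 2
      ∂(gaussianReal 0 v) = Real.pi ^ 2 / 8 := by
  set m := (log v - log 2 - eulerMascheroniConstant) / 2
  have hlog : ∀ t ∈ Ioi (0 : ℝ),
      t ^ (-(1 / 2) : ℝ) * exp (-t) * (log √(2 * v * t) - m) ^ 2 = 4⁻¹ * (t ^ (-(1 / 2) : ℝ)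
        * ((log t + (eulerMascheroniConstant + 2 * log 2)) ^ 2 * exp (-t))) := by
    intro t (ht : 0 < t)
    have hv' : (0 : ℝ) < v := hv
    rw [log_sqrt (by positivity), log_mul (by positivity) ht.ne', log_mul two_ne_zero hv'.ne']
    ring
  rw [integral_gaussianReal_comp_abs hv.ne' fun y => (log y - m) ^ 2,
    setIntegral_congr_fun measurableSet_Ioi hlog, integral_const_mul,
    integral_rpow_neg_half_mul_sq_log_add_mul_exp_neg]
  field_simp [(sqrt_pos.mpr pi_pos).ne']
  ring
end

section
/- Let f(x) = (2π)^{−1/2} exp(−x²/2) be the standard normal density and let f^{(j)} denote its j-th derivative. For every integer k ≥ 1, ∫_ℝ ln|x| · f^{(2k)}(x) dx = (−1)^{k−1} · 2^{k−1} (k−1)!. -/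
open MeasureTheory Real Set Filter Polynomial Topology
open scoped Nat

/-!
Write `γ x = exp (-x² / 2)`, so that `γ⁽ⁿ⁾ = (-1)ⁿ Heₙ γ` with the probabilists' Hermite
polynomials `Heₙ`. Since `He₂ₘ₊₁` is odd, `γ⁽²ᵐ⁺¹⁾ = -X Qₘ γ` for the polynomial `Qₘ = He₂ₘ₊₁ / X`;
hence the boundary term `log |x| γ⁽²ᵐ⁺¹⁾(x)` of one integration by parts vanishes at `0` as well as
at `±∞`, and `∫ log |x| γ⁽²ᵐ⁺²⁾ = ∫ Qₘ γ`. The recurrence `Heₙ₊₂ = X Heₙ₊₁ - (n + 1) Heₙ` gives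
`Qₘ₊₁ = He₂ₘ₊₂ - (2m + 2) Qₘ`, and `∫ Heₙ₊₁ γ = 0` since `Heₙ₊₁ γ = -(Heₙ γ)'`; so
`∫ Qₘ γ = (-2)ᵐ m! √(2π)`, and the normalising constant of the density cancels `√(2π)`.
-/

namespace Polynomial

theorem derivative_hermite_succ (n : ℕ) :
    derivative (hermite (n + 1)) = (n + 1 : ℤ[X]) * hermite n := by
  induction n with
  | zero => simp
  | succ n ih =>
    rw [hermite_succ (n + 1), derivative_sub, derivative_mul, derivative_X, ih, derivative_mul,
      hermite_succ n]
    simp only [derivative_add, derivative_natCast, derivative_one]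
    push_cast
    ring

theorem hermite_succ_succ (n : ℕ) :
    hermite (n + 2) = X * hermite (n + 1) - (n + 1 : ℤ[X]) * hermite n := by
  rw [hermite_succ (n + 1), derivative_hermite_succ]

theorem X_mul_divX_hermite_odd (m : ℕ) :
    X * (hermite (2 * m + 1)).divX = hermite (2 * m + 1) := by
  have h := X_mul_divX_add (hermite (2 * m + 1))
  rwa [coeff_hermite_of_odd_add (n := 2 * m + 1) (k := 0) ⟨m, rfl⟩, C_0, add_zero] at h

theorem divX_hermite_odd_succ (m : ℕ) :
    (hermite (2 * (m + 1) + 1)).divX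
      = hermite (2 * m + 2) - (2 * m + 2 : ℤ[X]) * (hermite (2 * m + 1)).divX := by
  apply mul_left_cancel₀ X_ne_zero
  rw [X_mul_divX_hermite_odd, mul_sub, mul_left_comm, X_mul_divX_hermite_odd,
    show 2 * (m + 1) + 1 = 2 * m + 1 + 2 by ring, hermite_succ_succ]
  push_cast
  ring

end Polynomial

theorem integral_eq_zero_of_hasDerivAt_of_ne {E : Type*} [NormedAddCommGroup E] [NormedSpace ℝ E]
    [CompleteSpace E] {f f' : ℝ → E} {a : ℝ} (hcont : ContinuousAt f a)
    (hderiv : ∀ x ≠ a, HasDerivAt f (f' x) x) (hf' : Integrable f')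
    (hbot : Tendsto f atBot (𝓝 0)) (htop : Tendsto f atTop (𝓝 0)) :
    ∫ x, f' x = 0 := by
  rw [← intervalIntegral.integral_Iic_add_Ioi hf'.integrableOn hf'.integrableOn,
    integral_Iic_of_hasDerivAt_of_tendsto hcont.continuousWithinAt
      (fun x hx => hderiv x hx.ne) hf'.integrableOn hbot,
    integral_Ioi_of_hasDerivAt_of_tendsto hcont.continuousWithinAt
      (fun x hx => hderiv x hx.ne') hf'.integrableOn htop]
  abel

namespace Real

theorem abs_log_le_abs_self {x : ℝ} (hx : 1 ≤ |x|) : |log x| ≤ |x| := by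
  rw [← log_abs, abs_of_nonneg (log_nonneg hx)]
  exact log_le_self (abs_nonneg x)

theorem tendsto_log_mul_cocompact {f : ℝ → ℝ}
    (hf : Tendsto (fun x => x * f x) (cocompact ℝ) (𝓝 0)) :
    Tendsto (fun x => log x * f x) (cocompact ℝ) (𝓝 0) := by
  refine squeeze_zero_norm' ?_ (tendsto_zero_iff_norm_tendsto_zero.mp hf)
  filter_upwards [tendsto_norm_cocompact_atTop.eventually_ge_atTop 1] with x hx
  rw [norm_mul, norm_mul]
  exact mul_le_mul_of_nonneg_right (abs_log_le_abs_self hx) (norm_nonneg _)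

theorem integrable_log_mul {f : ℝ → ℝ} (hf : Continuous f)
    (hxf : Integrable fun x => x * f x) : Integrable fun x => log x * f x := by
  rw [← integrableOn_univ, ← union_compl_self (Icc (-1 : ℝ) 1)]
  refine IntegrableOn.union ?_ ?_
  · have hlog : IntegrableOn log (Icc (-1 : ℝ) 1) :=
      (integrableOn_Icc_iff_integrableOn_Ioc).mpr
        ((intervalIntegrable_iff_integrableOn_Ioc_of_le (by norm_num)).mp
          intervalIntegral.intervalIntegrable_log')
    exact hlog.mul_continuousOn hf.continuousOn isCompact_Icc
  · refine hxf.norm.integrableOn.mono'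
      (measurable_log.mul hf.measurable).aestronglyMeasurable.restrict ?_
    refine ae_restrict_of_forall_mem measurableSet_Icc.compl fun x hx => ?_
    have hx : 1 ≤ |x| := not_lt.mp fun h => hx (abs_le.mp h.le)
    rw [norm_mul, norm_mul]
    exact mul_le_mul_of_nonneg_right (abs_log_le_abs_self hx) (norm_nonneg _)

theorem integral_log_mul_deriv_eq_neg_integral {g g' q : ℝ → ℝ}
    (hg : ∀ x ≠ 0, HasDerivAt g (g' x) x) (hgq : ∀ x, g x = x * q x) (hq : ContinuousAt q 0)
    (hqi : Integrable q) (hlog : Integrable fun x => log x * g' x)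
    (hlim : Tendsto (fun x => log x * g x) (cocompact ℝ) (𝓝 0)) :
    ∫ x, log x * g' x = -∫ x, q x := by
  have hderiv : ∀ x ≠ 0, HasDerivAt (fun x => log x * g x) (q x + log x * g' x) x := by
    intro x hx
    refine ((hasDerivAt_log hx).mul (hg x hx)).congr_deriv ?_
    rw [hgq x]
    field_simp
  have hcont : ContinuousAt (fun x => log x * g x) 0 := by
    have h : (fun x => log x * g x) = fun x => x * log x * q x :=
      funext fun x => by rw [hgq]; ring
    rw [h]
    exact continuous_mul_log.continuousAt.mul hq
  have h := integral_eq_zero_of_hasDerivAt_of_ne hcont hderiv (hqi.add hlog)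
    (hlim.mono_left atBot_le_cocompact) (hlim.mono_left atTop_le_cocompact)
  rw [integral_add hqi hlog] at h
  linarith

end Real

section PolynomialMulGaussian

variable {R : Type*} [CommSemiring R] [Algebra R ℝ] {b : ℝ}

theorem integrable_aeval_mul_exp_neg_mul_sq (hb : 0 < b) (p : R[X]) :
    Integrable fun x : ℝ => aeval x p * exp (-b * x ^ 2) := by
  induction p using Polynomial.induction_on' with
  | add p q hp hq =>
    simp only [map_add, add_mul]
    exact hp.add hq
  | monomial n c =>
    have := (integrable_rpow_mul_exp_neg_mul_sq hb (s := n)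
      (by linarith [n.cast_nonneg (α := ℝ)])).const_mul (algebraMap R ℝ c)
    simpa [aeval_monomial, rpow_natCast, mul_assoc] using this

theorem tendsto_aeval_mul_exp_neg_mul_sq_cocompact (hb : 0 < b) (p : R[X]) :
    Tendsto (fun x : ℝ => aeval x p * exp (-b * x ^ 2)) (cocompact ℝ) (𝓝 0) := by
  induction p using Polynomial.induction_on' with
  | add p q hp hq => simpa only [map_add, add_mul, add_zero] using hp.add hq
  | monomial n c =>
    rw [tendsto_zero_iff_norm_tendsto_zero]
    have := (tendsto_rpow_abs_mul_exp_neg_mul_sq_cocompact hb n).const_mul ‖algebraMap R ℝ c‖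
    simpa [aeval_monomial, abs_mul, mul_assoc] using this

theorem hasDerivAt_aeval_mul_exp_neg_mul_sq (p : R[X]) (x : ℝ) :
    HasDerivAt (fun x => aeval x p * exp (-b * x ^ 2))
      ((aeval x (derivative p) - 2 * b * x * aeval x p) * exp (-b * x ^ 2)) x := by
  refine ((p.hasDerivAt_aeval x).mul ((hasDerivAt_pow 2 x).const_mul (-b)).exp).congr_deriv ?_
  push_cast
  ring

theorem integral_aeval_derivative_sub_mul_exp_neg_mul_sq (hb : 0 < b) (p : R[X]) :
    ∫ x, (aeval x (derivative p) - 2 * b * x * aeval x p) * exp (-b * x ^ 2) = 0 := by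
  refine integral_eq_zero_of_hasDerivAt_of_integrable
    (hasDerivAt_aeval_mul_exp_neg_mul_sq p) ?_
    (integrable_aeval_mul_exp_neg_mul_sq hb p)
  refine ((integrable_aeval_mul_exp_neg_mul_sq hb (derivative p)).sub
    ((integrable_aeval_mul_exp_neg_mul_sq hb (X * p)).const_mul (2 * b))).congr ?_
  refine Eventually.of_forall fun x => ?_
  simp only [Pi.sub_apply, map_mul, aeval_X]
  ring

theorem integrable_log_mul_aeval_mul_exp_neg_mul_sq (hb : 0 < b) (p : R[X]) :
    Integrable fun x => log x * (aeval x p * exp (-b * x ^ 2)) := by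
  refine Real.integrable_log_mul (by fun_prop) ?_
  have h := integrable_aeval_mul_exp_neg_mul_sq hb (X * p)
  simp only [map_mul, aeval_X] at h
  simpa only [mul_assoc] using h

theorem tendsto_log_mul_aeval_mul_exp_neg_mul_sq_cocompact (hb : 0 < b) (p : R[X]) :
    Tendsto (fun x => log x * (aeval x p * exp (-b * x ^ 2))) (cocompact ℝ) (𝓝 0) := by
  refine Real.tendsto_log_mul_cocompact ?_
  have h := tendsto_aeval_mul_exp_neg_mul_sq_cocompact hb (X * p)
  simp only [map_mul, aeval_X] at h
  simpa only [mul_assoc] using h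

end PolynomialMulGaussian

theorem iteratedDeriv_exp_neg_half_mul_sq (n : ℕ) :
    iteratedDeriv n (fun x => exp (-(1 / 2) * x ^ 2))
      = fun x => aeval x ((-1) ^ n * hermite n) * exp (-(1 / 2) * x ^ 2) := by
  have h : (fun x : ℝ => exp (-(1 / 2) * x ^ 2)) = fun x => exp (-(x ^ 2 / 2)) :=
    funext fun x => by ring_nf
  funext x
  rw [iteratedDeriv_eq_iterate, h, deriv_gaussian_eq_hermite_mul_gaussian]
  simp only [map_mul, map_pow, map_neg, map_one]
  ring_nf

theorem integral_aeval_hermite_succ_mul_exp_neg_half_mul_sq (n : ℕ) :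
    ∫ x, aeval x (hermite (n + 1)) * exp (-(1 / 2) * x ^ 2) = 0 := by
  have h := integral_aeval_derivative_sub_mul_exp_neg_mul_sq one_half_pos (hermite n)
  rw [← neg_eq_zero, ← integral_neg, ← h]
  congr 1 with x
  rw [hermite_succ]
  simp only [map_sub, map_mul, aeval_X]
  ring

theorem integral_aeval_divX_hermite_odd_mul_exp_neg_half_mul_sq (m : ℕ) :
    ∫ x, aeval x (hermite (2 * m + 1)).divX * exp (-(1 / 2) * x ^ 2)
      = (-1) ^ m * 2 ^ m * m ! * √(2 * π) := by
  induction m with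
  | zero =>
    have h : (hermite 1).divX = 1 := mul_left_cancel₀ X_ne_zero <| by
      rw [X_mul_divX_hermite_odd 0, hermite_one, mul_one]
    simp only [h, map_one, one_mul, integral_gaussian]
    norm_num [mul_comm]
  | succ m ih =>
    simp only [divX_hermite_odd_succ, map_sub, map_mul, map_add, map_natCast, map_ofNat, sub_mul,
      mul_assoc]
    rw [integral_sub (integrable_aeval_mul_exp_neg_mul_sq one_half_pos _)
        ((integrable_aeval_mul_exp_neg_mul_sq one_half_pos _).const_mul _),
      integral_const_mul, ih, integral_aeval_hermite_succ_mul_exp_neg_half_mul_sq (2 * m + 1)]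
    push_cast [Nat.factorial_succ]
    ring

theorem integral_log_mul_iteratedDeriv_exp_neg_half_mul_sq (m : ℕ) :
    ∫ x, log x * iteratedDeriv (2 * m + 2) (fun x => exp (-(1 / 2) * x ^ 2)) x
      = ∫ x, aeval x (hermite (2 * m + 1)).divX * exp (-(1 / 2) * x ^ 2) := by
  have hsmooth : ContDiff ℝ ⊤ fun x : ℝ => exp (-(1 / 2) * x ^ 2) := by fun_prop
  have hderiv : ∀ x, HasDerivAt (iteratedDeriv (2 * m + 1) fun x => exp (-(1 / 2) * x ^ 2))
      (iteratedDeriv (2 * m + 2) (fun x => exp (-(1 / 2) * x ^ 2)) x) x := fun x => by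
    rw [iteratedDeriv_succ (n := 2 * m + 1)]
    exact ((hsmooth.differentiable_iteratedDeriv (2 * m + 1) (WithTop.coe_lt_top _)) x).hasDerivAt
  rw [Real.integral_log_mul_deriv_eq_neg_integral (fun x _ => hderiv x)
    (q := fun x => -(aeval x (hermite (2 * m + 1)).divX * exp (-(1 / 2) * x ^ 2))) _ (by fun_prop)
    (integrable_aeval_mul_exp_neg_mul_sq one_half_pos _).neg, integral_neg, neg_neg]
  · rw [iteratedDeriv_exp_neg_half_mul_sq]
    exact integrable_log_mul_aeval_mul_exp_neg_mul_sq one_half_pos _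
  · rw [iteratedDeriv_exp_neg_half_mul_sq]
    exact tendsto_log_mul_aeval_mul_exp_neg_mul_sq_cocompact one_half_pos _
  · intro x
    rw [iteratedDeriv_exp_neg_half_mul_sq]
    conv_lhs => rw [← X_mul_divX_hermite_odd m]
    simp only [map_mul, map_neg, map_one, aeval_X, Odd.neg_one_pow ⟨m, rfl⟩]
    ring

/-- For the standard normal density `f` and every `k ≥ 1`,
`∫ ln|x| f^(2k)(x) dx = (-1)^(k-1) 2^(k-1) (k-1)!`. -/
theorem integral_log_abs_mul_iteratedDeriv_gaussian_density (k : ℕ) (hk : 1 ≤ k) :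
    ∫ x : ℝ, Real.log |x|
        * iteratedDeriv (2 * k) (fun x : ℝ => (2 * Real.pi) ^ (-(1 : ℝ)/2) * Real.exp (-x ^ 2 / 2)) x
      = (-1) ^ (k - 1) * 2 ^ (k - 1) * (Nat.factorial (k - 1)) := by
  obtain ⟨m, rfl⟩ := Nat.exists_eq_add_of_le' hk
  have hdensity : (fun x : ℝ => (2 * π) ^ (-(1 : ℝ) / 2) * exp (-x ^ 2 / 2))
      = fun x => (2 * π) ^ (-(1 : ℝ) / 2) * exp (-(1 / 2) * x ^ 2) :=
    funext fun x => by ring_nf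
  have hnormalize : (2 * π) ^ (-(1 : ℝ) / 2) * √(2 * π) = 1 := by
    rw [sqrt_eq_rpow, ← rpow_add (by positivity)]
    norm_num
  simp_rw [hdensity, iteratedDeriv_const_mul_field, log_abs, mul_left_comm (log _),
    integral_const_mul, show 2 * (m + 1) = 2 * m + 2 by ring,
    integral_log_mul_iteratedDeriv_exp_neg_half_mul_sq,
    integral_aeval_divX_hermite_odd_mul_exp_neg_half_mul_sq, Nat.add_sub_cancel]
  linear_combination ((-1) ^ m * 2 ^ m * m ! : ℝ) * hnormalize
end

section
/- The series identity ∑_{k=1}^∞ 2^{2k−2} ((k−1)!)² / (2k)! = π²/8 holds. -/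
/-!
Since `∫₀¹ (1 - x²)ⁿ dx = 4ⁿ (n!)² / (2n+1)!`, the `n`-th term of the series is
`∫₀¹ (1 - x²)ⁿ / (2n+2) dx`. Summing the logarithmic series under the integral sign gives
`∫₀¹ -log x / (1 - x²) dx`; expanding `1 / (1 - x²)` geometrically instead gives
`∑ₘ ∫₀¹ -log x · x^(2m) dx = ∑ₘ 1 / (2m+1)² = π²/8`. All terms are nonnegative, so both
interchanges of sum and integral are instances of monotone convergence.
-/

open Real Set MeasureTheory intervalIntegral

theorem hasSum_of_tsum_ofReal_eq {ι κ : Type*} {a : ι → ℝ} {b : κ → ℝ} {s : ℝ}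
    (ha : ∀ i, 0 ≤ a i) (hb : ∀ j, 0 ≤ b j) (hbs : HasSum b s)
    (h : ∑' i, ENNReal.ofReal (a i) = ∑' j, ENNReal.ofReal (b j)) : HasSum a s := by
  have hs : ∑' i, ENNReal.ofReal (a i) = ENNReal.ofReal s := by
    rw [h, ← ENNReal.ofReal_tsum_of_nonneg hb hbs.summable, hbs.tsum_eq]
  have ha_sum : Summable a :=
    (ENNReal.summable_toReal (hs ▸ ENNReal.ofReal_ne_top)).congr fun i =>
      ENNReal.toReal_ofReal (ha i)
  rw [ha_sum.hasSum_iff, ← ENNReal.ofReal_eq_ofReal_iff (tsum_nonneg ha) (hbs.nonneg hb),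
    ENNReal.ofReal_tsum_of_nonneg ha ha_sum, hs]

section SeriesOfIntegrals

variable {ι κ α : Type*} [Countable ι] [Countable κ] [MeasurableSpace α] {μ : Measure α}

theorem lintegral_ofReal_eq_tsum_ofReal_integral {f : ι → α → ℝ} {F : α → ℝ}
    (hf : ∀ i, Integrable (f i) μ) (hf_nonneg : ∀ i, 0 ≤ᵐ[μ] f i)
    (hfF : ∀ᵐ x ∂μ, HasSum (fun i => f i x) (F x)) :
    ∫⁻ x, ENNReal.ofReal (F x) ∂μ = ∑' i, ENNReal.ofReal (∫ x, f i x ∂μ) := by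
  calc ∫⁻ x, ENNReal.ofReal (F x) ∂μ = ∫⁻ x, ∑' i, ENNReal.ofReal (f i x) ∂μ := by
        refine lintegral_congr_ae ?_
        filter_upwards [hfF, ae_all_iff.2 hf_nonneg] with x hx hx0
        rw [← ENNReal.ofReal_tsum_of_nonneg hx0 hx.summable, hx.tsum_eq]
    _ = ∑' i, ∫⁻ x, ENNReal.ofReal (f i x) ∂μ :=
        lintegral_tsum fun i => (hf i).aemeasurable.ennreal_ofReal
    _ = ∑' i, ENNReal.ofReal (∫ x, f i x ∂μ) :=
        tsum_congr fun i => (ofReal_integral_eq_lintegral_ofReal (hf i) (hf_nonneg i)).symm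

theorem hasSum_integral_of_ae_hasSum_eq {f : ι → α → ℝ} {g : κ → α → ℝ} {F : α → ℝ} {s : ℝ}
    (hf : ∀ i, Integrable (f i) μ) (hf_nonneg : ∀ i, 0 ≤ᵐ[μ] f i)
    (hfF : ∀ᵐ x ∂μ, HasSum (fun i => f i x) (F x))
    (hg : ∀ j, Integrable (g j) μ) (hg_nonneg : ∀ j, 0 ≤ᵐ[μ] g j)
    (hgF : ∀ᵐ x ∂μ, HasSum (fun j => g j x) (F x))
    (hgs : HasSum (fun j => ∫ x, g j x ∂μ) s) : HasSum (fun i => ∫ x, f i x ∂μ) s :=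
  hasSum_of_tsum_ofReal_eq (fun i => integral_nonneg_of_ae (hf_nonneg i))
    (fun j => integral_nonneg_of_ae (hg_nonneg j)) hgs <| by
    rw [← lintegral_ofReal_eq_tsum_ofReal_integral hf hf_nonneg hfF,
      lintegral_ofReal_eq_tsum_ofReal_integral hg hg_nonneg hgF]

end SeriesOfIntegrals

theorem hasSum_one_div_odd_sq : HasSum (fun m : ℕ => 1 / (2 * (m : ℝ) + 1) ^ 2) (π ^ 2 / 8) := by
  have hinj : Function.Injective fun m : ℕ => 2 * m + 1 := fun a b h => by simpa using h
  have hodd : Summable fun m : ℕ => 1 / (2 * (m : ℝ) + 1) ^ 2 :=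
    (hasSum_zeta_two.summable.comp_injective hinj).congr fun m => by simp
  have heven : HasSum (fun m : ℕ => 1 / (2 * (m : ℝ)) ^ 2) (π ^ 2 / 6 / 4) :=
    (hasSum_zeta_two.div_const 4).congr_fun fun m => by ring
  have hall : HasSum (fun n : ℕ => 1 / (n : ℝ) ^ 2)
      (π ^ 2 / 6 / 4 + ∑' m : ℕ, 1 / (2 * (m : ℝ) + 1) ^ 2) :=
    HasSum.even_add_odd (by simpa using heven) (by simpa using hodd.hasSum)
  convert hodd.hasSum using 1
  linarith [hall.unique hasSum_zeta_two]

theorem intervalIntegrable_neg_log_mul_pow (k : ℕ) (a b : ℝ) :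
    IntervalIntegrable (fun x => -log x * x ^ k) volume a b :=
  intervalIntegrable_log'.neg.mul_continuousOn (continuous_pow k).continuousOn

theorem integral_neg_log_mul_pow (k : ℕ) :
    ∫ x in (0 : ℝ)..1, -log x * x ^ k = 1 / ((k : ℝ) + 1) ^ 2 := by
  let F : ℝ → ℝ := fun x => x ^ (k + 1) / ((k : ℝ) + 1) ^ 2 - x ^ (k + 1) * log x / ((k : ℝ) + 1)
  have hF_cont : Continuous F := by
    have : Continuous fun x : ℝ => x ^ (k + 1) * log x :=
      ((continuous_pow k).mul continuous_mul_log).congr fun x => by simp only [Pi.mul_apply]; ring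
    exact ((continuous_pow _).div_const _).sub (this.div_const _)
  have hF_deriv : ∀ x ∈ Ioo (0 : ℝ) 1, HasDerivAt F (-log x * x ^ k) x := by
    intro x hx
    have hx0 : x ≠ 0 := hx.1.ne'
    have hpow : HasDerivAt (fun x : ℝ => x ^ (k + 1)) (((k : ℝ) + 1) * x ^ k) x := by
      simpa using hasDerivAt_pow (k + 1) x
    refine ((hpow.div_const (((k : ℝ) + 1) ^ 2)).sub
      ((hpow.mul (hasDerivAt_log hx0)).div_const ((k : ℝ) + 1))).congr_deriv ?_
    field_simp
    ring
  rw [integral_eq_sub_of_hasDerivAt_of_le zero_le_one hF_cont.continuousOn hF_deriv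
    (intervalIntegrable_neg_log_mul_pow k 0 1)]
  simp [F]

theorem hasSum_integral_neg_log_mul_pow_two_mul :
    HasSum (fun m : ℕ => ∫ x in (0 : ℝ)..1, -log x * x ^ (2 * m)) (π ^ 2 / 8) :=
  hasSum_one_div_odd_sq.congr_fun fun m => by
    rw [integral_neg_log_mul_pow]
    push_cast
    ring

theorem integral_one_sub_sq_pow_succ (n : ℕ) :
    (2 * (n : ℝ) + 3) * ∫ x in (0 : ℝ)..1, (1 - x ^ 2) ^ (n + 1) =
      (2 * (n : ℝ) + 2) * ∫ x in (0 : ℝ)..1, (1 - x ^ 2) ^ n := by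
  have hint : ∀ m : ℕ, IntervalIntegrable (fun x : ℝ => (1 - x ^ 2) ^ m) volume 0 1 := fun m =>
    (by fun_prop : Continuous fun x : ℝ => (1 - x ^ 2) ^ m).intervalIntegrable 0 1
  -- integration by parts against `x`
  have hderiv : ∀ x ∈ uIcc (0 : ℝ) 1, HasDerivAt (fun x : ℝ => x * (1 - x ^ 2) ^ (n + 1))
      ((2 * (n : ℝ) + 3) * (1 - x ^ 2) ^ (n + 1) - (2 * (n : ℝ) + 2) * (1 - x ^ 2) ^ n) x := by
    intro x _
    have hbase : HasDerivAt (fun x : ℝ => 1 - x ^ 2) (-(2 * x)) x := by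
      simpa using (hasDerivAt_pow 2 x).const_sub 1
    refine ((hasDerivAt_id x).mul (hbase.pow (n + 1))).congr_deriv ?_
    simp only [id, Pi.pow_apply, Nat.cast_add, Nat.cast_one, add_tsub_cancel_right]
    ring
  have := integral_eq_sub_of_hasDerivAt hderiv
    (((hint _).const_mul _).sub ((hint _).const_mul _))
  rw [integral_sub ((hint _).const_mul _) ((hint _).const_mul _),
    intervalIntegral.integral_const_mul, intervalIntegral.integral_const_mul] at this
  simp only [one_pow, sub_self, zero_pow n.succ_ne_zero, zero_mul, mul_zero] at this
  linarith

theorem integral_one_sub_sq_pow (n : ℕ) :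
    ∫ x in (0 : ℝ)..1, (1 - x ^ 2) ^ n =
      (2 : ℝ) ^ (2 * n) * n.factorial ^ 2 / (2 * n + 1).factorial := by
  induction n with
  | zero => simp
  | succ n ih =>
    have h3 : (2 * (n : ℝ) + 3) ≠ 0 := by positivity
    refine mul_left_cancel₀ h3 ((integral_one_sub_sq_pow_succ n).trans ?_)
    rw [ih, show 2 * (n + 1) + 1 = (2 * n + 1) + 1 + 1 by ring]
    push_cast [Nat.factorial_succ]
    field_simp
    ring

theorem integral_one_sub_sq_pow_div (n : ℕ) :
    ∫ x in (0 : ℝ)..1, (1 - x ^ 2) ^ n / (2 * ((n : ℝ) + 1)) =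
      (2 : ℝ) ^ (2 * n) * n.factorial ^ 2 / (2 * (n + 1)).factorial := by
  rw [intervalIntegral.integral_div, integral_one_sub_sq_pow,
    show 2 * (n + 1) = (2 * n + 1) + 1 by ring, Nat.factorial_succ (2 * n + 1)]
  push_cast
  field_simp
  ring

theorem hasSum_one_sub_sq_pow_div {x : ℝ} (hx0 : x ≠ 0) (hx1 : |x| < 1) :
    HasSum (fun n : ℕ => (1 - x ^ 2) ^ n / (2 * ((n : ℝ) + 1))) (-log x / (1 - x ^ 2)) := by
  have hx2 : x ^ 2 < 1 := (sq_lt_one_iff_abs_lt_one x).2 hx1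
  have hx2' : 0 < x ^ 2 := by positivity
  have hy : 1 - x ^ 2 ≠ 0 := by linarith
  have hlog := hasSum_pow_div_log_of_abs_lt_one (x := 1 - x ^ 2)
    (abs_lt.2 ⟨by linarith, by linarith⟩)
  rw [sub_sub_cancel, log_pow, Nat.cast_ofNat] at hlog
  have := hlog.div_const (2 * (1 - x ^ 2))
  rw [show -(2 * log x) / (2 * (1 - x ^ 2)) = -log x / (1 - x ^ 2) by field_simp] at this
  exact this.congr_fun fun n => by field_simp; ring

theorem hasSum_neg_log_mul_pow_two_mul {x : ℝ} (hx : |x| < 1) :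
    HasSum (fun m : ℕ => -log x * x ^ (2 * m)) (-log x / (1 - x ^ 2)) := by
  have hx2 : |x ^ 2| < 1 := by
    simpa [abs_pow] using (sq_lt_one_iff_abs_lt_one x).2 hx
  simpa only [pow_mul, div_eq_mul_inv] using (hasSum_geometric_of_abs_lt_one hx2).mul_left (-log x)

/-- `∑_{k≥1} 2^(2k-2) ((k-1)!)² / (2k)! = π²/8` (written with `k = n+1`). -/
theorem sum_sq_nu_div_factorial :
    ∑' n : ℕ, (2 : ℝ) ^ (2 * n) * (Nat.factorial n) ^ 2 / Nat.factorial (2 * (n + 1))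
      = Real.pi ^ 2 / 8 := by
  have hIoo : ∀ f : ℝ → ℝ, ∫ x in (0 : ℝ)..1, f x = ∫ x in Ioo 0 1, f x := fun f => by
    rw [integral_of_le zero_le_one, integral_Ioc_eq_integral_Ioo]
  have hmem : ∀ᵐ x ∂(volume.restrict (Ioo (0 : ℝ) 1)), x ∈ Ioo (0 : ℝ) 1 :=
    ae_restrict_mem measurableSet_Ioo
  have habs : ∀ x ∈ Ioo (0 : ℝ) 1, |x| < 1 := fun x hx => abs_lt.2 ⟨by linarith [hx.1], hx.2⟩
  have key := hasSum_integral_of_ae_hasSum_eq (μ := volume.restrict (Ioo (0 : ℝ) 1))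
    (f := fun (n : ℕ) x => (1 - x ^ 2) ^ n / (2 * ((n : ℝ) + 1)))
    (g := fun (m : ℕ) x => -log x * x ^ (2 * m)) (F := fun x => -log x / (1 - x ^ 2))
    (fun n => (Continuous.integrableOn_Icc (by fun_prop)).mono_set Ioo_subset_Icc_self)
    (fun n => by
      filter_upwards [hmem] with x hx
      have : 0 ≤ 1 - x ^ 2 := by nlinarith [hx.1, hx.2]
      positivity)
    (by filter_upwards [hmem] with x hx using hasSum_one_sub_sq_pow_div hx.1.ne' (habs x hx))
    (fun m => (intervalIntegrable_neg_log_mul_pow _ 0 1).1.mono_set Ioo_subset_Ioc_self)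
    (fun m => by
      filter_upwards [hmem] with x hx
      exact mul_nonneg (neg_nonneg.2 (log_nonpos hx.1.le hx.2.le)) (pow_nonneg hx.1.le _))
    (by filter_upwards [hmem] with x hx using hasSum_neg_log_mul_pow_two_mul (habs x hx))
    (by simpa only [hIoo] using hasSum_integral_neg_log_mul_pow_two_mul)
  simpa only [← hIoo, integral_one_sub_sq_pow_div] using key.tsum_eq
end

section
/- Let ρ be a real number with |ρ| > 1, let (ε_t)_{t≥1} be i.i.d. standard normal N(0,1) random variables, and define X_0 = 0 and X_t = ρ X_{t−1} + √(ρ² − 1) ε_t for t ≥ 1 (so X_n ~ N(0, ρ^{2n} − 1)). Then (1/n) ln|X_n| → ln|ρ| almost surely as n → ∞. -/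
/-!
Unrolling the recurrence, `X_n = √(ρ² - 1) ∑_{t=1}^n ρ^(n-t) ε_t` is centred Gaussian with
variance `ρ^(2n) - 1`. Its density is at most `1 / √(2π(ρ^(2n) - 1)) ≲ |ρ|^(-n)`, so
`P(|X_n| < |ρ|^n e^(-δn))` decays geometrically and Borel–Cantelli gives
`|X_n| ≥ |ρ|^n e^(-δn)` eventually. Conversely `|X_n| ≤ √(ρ² - 1) |ρ|^n ∑_{t ≤ n} |ε_t|`, and by
the strong law of large numbers that sum is `O(n)`, so `|X_n| ≤ |ρ|^n e^(δn)` eventually.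
-/

open MeasureTheory ProbabilityTheory Real Filter Finset
open scoped NNReal ENNReal Topology

lemma gaussianPDFReal_le (μ : ℝ) (v : ℝ≥0) (x : ℝ) :
    gaussianPDFReal μ v x ≤ (√(2 * π * v))⁻¹ := by
  rw [gaussianPDFReal_def]
  refine mul_le_of_le_one_right (by positivity) (exp_le_one_iff.mpr ?_)
  exact div_nonpos_of_nonpos_of_nonneg (neg_nonpos.mpr (sq_nonneg _)) (by positivity)

lemma gaussianReal_Ioo_le (μ : ℝ) {v : ℝ≥0} (hv : v ≠ 0) (a b : ℝ) :
    gaussianReal μ v (Set.Ioo a b) ≤ ENNReal.ofReal ((b - a) / √(2 * π * v)) := by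
  rw [gaussianReal_apply μ hv]
  calc ∫⁻ x in Set.Ioo a b, gaussianPDF μ v x
      ≤ ∫⁻ _ in Set.Ioo a b, ENNReal.ofReal (√(2 * π * v))⁻¹ :=
        lintegral_mono fun x ↦ ENNReal.ofReal_le_ofReal (gaussianPDFReal_le μ v x)
    _ = ENNReal.ofReal ((b - a) / √(2 * π * v)) := by
        rw [setLIntegral_const, Real.volume_Ioo, ← ENNReal.ofReal_mul (by positivity),
          div_eq_inv_mul]

lemma measure_abs_lt_le_of_hasLaw_gaussianReal {Ω : Type*} [MeasurableSpace Ω] {P : Measure Ω}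
    {X : Ω → ℝ} {μ : ℝ} {v : ℝ≥0} (hX : HasLaw X (gaussianReal μ v) P) (hv : v ≠ 0) (r : ℝ) :
    P {ω | |X ω| < r} ≤ ENNReal.ofReal (2 * r / √(2 * π * v)) := by
  have hIoo : {x : ℝ | |x| < r} = Set.Ioo (-r) r := by ext; simp [abs_lt]
  rw [hX.measure_eq (measurableSet_lt measurable_abs measurable_const), hIoo]
  convert gaussianReal_Ioo_le μ hv (-r) r using 3
  ring

lemma hasLaw_sum_gaussianReal {Ω ι : Type*} [MeasurableSpace Ω] {P : Measure Ω}
    [IsProbabilityMeasure P] {η : ι → Ω → ℝ} {μ : ι → ℝ} {v : ι → ℝ≥0}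
    (hind : iIndepFun η P) (hη : ∀ i, HasLaw (η i) (gaussianReal (μ i) (v i)) P) (s : Finset ι) :
    HasLaw (∑ i ∈ s, η i) (gaussianReal (∑ i ∈ s, μ i) (∑ i ∈ s, v i)) P := by
  classical
  induction s using Finset.induction_on with
  | empty => simpa using hasLaw_dirac_of_ae_eq (P := P) (X := (0 : Ω → ℝ)) (x := 0) (by rfl)
  | insert j s hj ih =>
    have hindep : IndepFun (∑ i ∈ s, η i) (η j) P :=
      hind.indepFun_finsetSum_of_notMem₀ (fun i ↦ (hη i).aemeasurable) hj
    rw [sum_insert hj, sum_insert hj, sum_insert hj, add_comm (η j), add_comm (μ j),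
      add_comm (v j)]
    exact ⟨ih.aemeasurable.add (hη j).aemeasurable,
      gaussianReal_add_gaussianReal_of_indepFun hindep ih.map_eq (hη j).map_eq⟩

lemma ae_eventually_notMem_of_measureReal_le_geometric {Ω : Type*} [MeasurableSpace Ω]
    {P : Measure Ω} [IsFiniteMeasure P] {s : ℕ → Set Ω} {C q : ℝ} (hq₀ : 0 ≤ q) (hq₁ : q < 1)
    (hs : ∀ᶠ n in atTop, P.real (s n) ≤ C * q ^ n) :
    ∀ᵐ ω ∂P, ∀ᶠ n in atTop, ω ∉ s n := by
  have hsum : Summable fun n ↦ P.real (s n) :=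
    ((summable_geometric_of_lt_one hq₀ hq₁).mul_left C).of_norm_bounded_eventually_nat
      (hs.mono fun n hn ↦ by rwa [Real.norm_of_nonneg measureReal_nonneg])
  refine ae_eventually_notMem ?_
  have hreal : ∀ n, P (s n) = ENNReal.ofReal (P.real (s n)) := fun n ↦ (ofReal_measureReal).symm
  rw [tsum_congr hreal, ← ENNReal.ofReal_tsum_of_nonneg (fun _ ↦ measureReal_nonneg) hsum]
  exact ENNReal.ofReal_ne_top

lemma eq_mul_sum_pow_of_recurrence {x e : ℕ → ℝ} {ρ c : ℝ} (h0 : x 0 = 0)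
    (hrec : ∀ t, 1 ≤ t → x t = ρ * x (t - 1) + c * e t) (n : ℕ) :
    x n = c * ∑ t ∈ range n, ρ ^ (n - 1 - t) * e (t + 1) := by
  induction n with
  | zero => simp [h0]
  | succ n ih =>
    have hpow : ∀ t ∈ range n, ρ ^ (n - t) * e (t + 1) = ρ * (ρ ^ (n - 1 - t) * e (t + 1)) := by
      intro t ht
      rw [← mul_assoc, ← pow_succ', show n - 1 - t + 1 = n - t by grind]
    rw [hrec (n + 1) n.succ_pos, Nat.add_sub_cancel, ih, sum_range_succ, Nat.sub_self,
      sum_congr rfl hpow, ← mul_sum]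
    ring

lemma abs_sum_pow_mul_le {ρ : ℝ} (hρ : 1 ≤ |ρ|) (e : ℕ → ℝ) (n : ℕ) :
    |∑ t ∈ range n, ρ ^ (n - 1 - t) * e (t + 1)| ≤ |ρ| ^ n * ∑ t ∈ range n, |e (t + 1)| := by
  rw [mul_sum]
  refine (abs_sum_le_sum_abs _ _).trans (sum_le_sum fun t _ ↦ ?_)
  rw [abs_mul, abs_pow]
  gcongr
  omega

lemma eventually_le_exp_of_tendsto_inv_mul {s : ℕ → ℝ} {L : ℝ}
    (hs : Tendsto (fun n : ℕ ↦ (n : ℝ)⁻¹ * s n) atTop (𝓝 L)) {δ : ℝ} (hδ : 0 < δ) :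
    ∀ᶠ n : ℕ in atTop, s n ≤ exp (δ * n) := by
  have hlin : ∀ᶠ n : ℕ in atTop, s n ≤ (L + 1) * n := by
    filter_upwards [hs.eventually (eventually_lt_nhds (lt_add_one L)), eventually_gt_atTop 0]
      with n hn hn0
    have : (0 : ℝ) < n := Nat.cast_pos.mpr hn0
    rw [inv_mul_lt_iff₀ this] at hn
    linarith
  have hexp : ∀ᶠ n : ℕ in atTop, (L + 1) * n ≤ exp (δ * n) := by
    have := (((isLittleO_pow_exp_pos_mul_atTop 1 hδ).const_mul_left (L + 1)).comp_tendsto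
      tendsto_natCast_atTop_atTop).bound one_pos
    filter_upwards [this] with n hn
    simpa [Real.norm_eq_abs, abs_of_pos (exp_pos _)] using (le_abs_self _).trans hn
  filter_upwards [hlin, hexp] with n h₁ h₂ using h₁.trans h₂

lemma tendsto_inv_mul_log_of_bounds {u : ℕ → ℝ} {a : ℝ} (ha : 0 < a)
    (hlow : ∀ δ > 0, ∀ᶠ n : ℕ in atTop, a ^ n * exp (-(δ * n)) ≤ |u n|)
    (hup : ∀ δ > 0, ∀ᶠ n : ℕ in atTop, |u n| ≤ a ^ n * exp (δ * n)) :
    Tendsto (fun n : ℕ ↦ 1 / (n : ℝ) * log |u n|) atTop (𝓝 (log a)) := by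
  rw [Metric.tendsto_nhds]
  intro ε hε
  filter_upwards [hlow (ε / 2) (by positivity), hup (ε / 2) (by positivity),
    eventually_gt_atTop 0] with n hl hu hn
  have hn' : (0 : ℝ) < n := Nat.cast_pos.mpr hn
  have hpos : 0 < a ^ n * exp (-(ε / 2 * n)) := by positivity
  have hlog_l := log_le_log hpos hl
  have hlog_u := log_le_log (hpos.trans_le hl) hu
  rw [log_mul (by positivity) (exp_ne_zero _), log_pow, log_exp] at hlog_l
  rw [log_mul (by positivity) (exp_ne_zero _), log_pow, log_exp] at hlog_u
  rw [Real.dist_eq, abs_sub_lt_iff, one_div, ← div_eq_inv_mul]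
  constructor
  · rw [sub_lt_iff_lt_add, div_lt_iff₀ hn']; nlinarith
  · rw [sub_lt_comm, lt_div_iff₀ hn']; nlinarith

lemma sq_sub_one_mul_sum_sq_pow (ρ : ℝ) (n : ℕ) :
    (ρ ^ 2 - 1) * ∑ t ∈ range n, (ρ ^ (n - 1 - t)) ^ 2 = ρ ^ (2 * n) - 1 := by
  rw [sum_range_reflect (fun t ↦ (ρ ^ t) ^ 2) n]
  simp_rw [← pow_mul, mul_comm _ 2, pow_mul]
  rw [mul_comm, geom_sum_mul]

/-- The solution `√(ρ² - 1) ∑_{t=1}^n ρ^(n-t) ε_t` of the AR(1) recurrence started at `0`. -/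
noncomputable def ar1Sum {Ω : Type*} (ρ : ℝ) (ε : ℕ → Ω → ℝ) (n : ℕ) (ω : Ω) : ℝ :=
  √(ρ ^ 2 - 1) * ∑ t ∈ range n, ρ ^ (n - 1 - t) * ε (t + 1) ω

section AR1

variable {Ω : Type*} [MeasurableSpace Ω] {P : Measure Ω} {ε : ℕ → Ω → ℝ} {ρ : ℝ}

lemma hasLaw_ar1Sum [IsProbabilityMeasure P] (hindep : iIndepFun ε P)
    (hε : ∀ t, 1 ≤ t → HasLaw (ε t) (gaussianReal 0 1) P) (hρ : 1 ≤ |ρ|) (n : ℕ) :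
    HasLaw (ar1Sum ρ ε n) (gaussianReal 0 (ρ ^ (2 * n) - 1).toNNReal) P := by
  set w : ℕ → ℝ := fun t ↦ √(ρ ^ 2 - 1) * ρ ^ (n - 1 - t)
  have hind : iIndepFun (fun t ω ↦ w t * ε (t + 1) ω) P :=
    (hindep.precomp Nat.succ_injective).comp (fun t x ↦ w t * x)
      fun t ↦ measurable_const_mul _
  have hsum := hasLaw_sum_gaussianReal hind
    (fun t ↦ gaussianReal_const_mul (hε (t + 1) t.succ_pos) (w t)) (range n)
  have hfun : ar1Sum ρ ε n = ∑ t ∈ range n, fun ω ↦ w t * ε (t + 1) ω := by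
    ext ω
    simp only [ar1Sum, Finset.sum_apply, mul_sum, w, mul_assoc]
  have hρ2 : 0 ≤ ρ ^ 2 - 1 := by nlinarith [sq_abs ρ]
  rw [hfun]
  convert hsum using 2
  · simp
  · ext
    rw [Real.coe_toNNReal _ (by rw [← sq_sub_one_mul_sum_sq_pow]; positivity), NNReal.coe_sum,
      ← sq_sub_one_mul_sum_sq_pow, mul_sum]
    refine sum_congr rfl fun t _ ↦ ?_
    simp [w, mul_pow, Real.sq_sqrt hρ2]

lemma measureReal_abs_ar1Sum_lt_le [IsProbabilityMeasure P] (hindep : iIndepFun ε P)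
    (hε : ∀ t, 1 ≤ t → HasLaw (ε t) (gaussianReal 0 1) P) (hρ : 1 < |ρ|) {n : ℕ} (hn : 1 ≤ n)
    {r : ℝ} (hr : 0 ≤ r) :
    P.real {ω | |ar1Sum ρ ε n ω| < r} ≤ 2 * r / (√(2 * π * (1 - (ρ ^ 2)⁻¹)) * |ρ| ^ n) := by
  have hρ2 : 1 < ρ ^ 2 := by nlinarith [sq_abs ρ]
  have hκ : 0 < 1 - (ρ ^ 2)⁻¹ := sub_pos.mpr (inv_lt_one_of_one_lt₀ hρ2)
  have hsq : (|ρ| ^ n) ^ 2 = ρ ^ (2 * n) := by rw [← abs_pow, sq_abs, ← pow_mul, mul_comm]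
  have hvar : (1 - (ρ ^ 2)⁻¹) * (|ρ| ^ n) ^ 2 ≤ ρ ^ (2 * n) - 1 := by
    have : 1 ≤ (ρ ^ 2)⁻¹ * ρ ^ (2 * n) := by
      rw [one_le_inv_mul₀ (by positivity), pow_mul]
      exact le_self_pow₀ hρ2.le (by omega)
    rw [hsq, sub_mul, one_mul]
    linarith
  have hvpos : 0 < ρ ^ (2 * n) - 1 :=
    (mul_pos hκ (pow_pos (pow_pos (one_pos.trans hρ) n) 2)).trans_le hvar
  have hv : (ρ ^ (2 * n) - 1).toNNReal ≠ 0 := (Real.toNNReal_pos.mpr hvpos).ne'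
  have hlaw := measure_abs_lt_le_of_hasLaw_gaussianReal (hasLaw_ar1Sum hindep hε hρ.le n) hv r
  rw [measureReal_def]
  refine (ENNReal.toReal_le_of_le_ofReal (by positivity) hlaw).trans ?_
  refine div_le_div_of_nonneg_left (by positivity) (mul_pos (by positivity) (by positivity)) ?_
  rw [← Real.sqrt_sq (pow_nonneg (abs_nonneg ρ) n), ← Real.sqrt_mul (by positivity),
    Real.coe_toNNReal _ hvpos.le, mul_assoc]
  gcongr

lemma ae_eventually_le_abs_ar1Sum [IsProbabilityMeasure P] (hindep : iIndepFun ε P)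
    (hε : ∀ t, 1 ≤ t → HasLaw (ε t) (gaussianReal 0 1) P) (hρ : 1 < |ρ|) {δ : ℝ} (hδ : 0 < δ) :
    ∀ᵐ ω ∂P, ∀ᶠ n : ℕ in atTop, |ρ| ^ n * exp (-(δ * n)) ≤ |ar1Sum ρ ε n ω| := by
  have hbc := ae_eventually_notMem_of_measureReal_le_geometric
    (s := fun n ↦ {ω | |ar1Sum ρ ε n ω| < |ρ| ^ n * exp (-(δ * n))})
    (C := 2 / √(2 * π * (1 - (ρ ^ 2)⁻¹))) (exp_nonneg _) (exp_lt_one_iff.mpr (neg_lt_zero.mpr hδ))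
    (by
      filter_upwards [eventually_ge_atTop 1] with n hn
      refine (measureReal_abs_ar1Sum_lt_le hindep hε hρ hn (by positivity)).trans_eq ?_
      have : |ρ| ^ n ≠ 0 := (pow_pos (one_pos.trans hρ) n).ne'
      rw [← exp_nat_mul, mul_neg, mul_comm (n : ℝ)]
      field_simp)
  filter_upwards [hbc] with ω hω
  filter_upwards [hω] with n hn
  simpa using hn

lemma ae_forall_eventually_le_abs_ar1Sum [IsProbabilityMeasure P] (hindep : iIndepFun ε P)
    (hε : ∀ t, 1 ≤ t → HasLaw (ε t) (gaussianReal 0 1) P) (hρ : 1 < |ρ|) :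
    ∀ᵐ ω ∂P, ∀ δ > 0, ∀ᶠ n : ℕ in atTop, |ρ| ^ n * exp (-(δ * n)) ≤ |ar1Sum ρ ε n ω| := by
  have hk := ae_all_iff.2 fun k : ℕ ↦
    ae_eventually_le_abs_ar1Sum hindep hε hρ (δ := 1 / (k + 1)) (by positivity)
  filter_upwards [hk] with ω hω δ hδ
  obtain ⟨k, hk⟩ := exists_nat_one_div_lt hδ
  filter_upwards [hω k] with n hn
  refine le_trans ?_ hn
  gcongr

lemma ae_forall_eventually_abs_ar1Sum_le (hindep : iIndepFun ε P)
    (hε : ∀ t, 1 ≤ t → HasLaw (ε t) (gaussianReal 0 1) P) (hρ : 1 ≤ |ρ|) :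
    ∀ᵐ ω ∂P, ∀ δ > 0, ∀ᶠ n : ℕ in atTop, |ar1Sum ρ ε n ω| ≤ |ρ| ^ n * exp (δ * n) := by
  have hslln := strong_law_ae (μ := P) (fun t ω ↦ |ε (t + 1) ω|)
    (hε 1 le_rfl).hasGaussianLaw.integrable.abs
    (fun i j hij ↦ ((hindep.precomp Nat.succ_injective).indepFun hij).comp measurable_abs
      measurable_abs)
    (fun i ↦ (IdentDistrib.mk (hε (i + 1) i.succ_pos).aemeasurable (hε 1 le_rfl).aemeasurable
      ((hε (i + 1) i.succ_pos).map_eq.trans (hε 1 le_rfl).map_eq.symm)).comp measurable_abs)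
  filter_upwards [hslln] with ω hω δ hδ
  have hlim := hω.const_mul √(ρ ^ 2 - 1)
  simp_rw [smul_eq_mul, mul_left_comm √(ρ ^ 2 - 1)] at hlim
  filter_upwards [eventually_le_exp_of_tendsto_inv_mul hlim hδ] with n hn
  calc |ar1Sum ρ ε n ω|
      = √(ρ ^ 2 - 1) * |∑ t ∈ range n, ρ ^ (n - 1 - t) * ε (t + 1) ω| := by
        rw [ar1Sum, abs_mul, abs_of_nonneg (sqrt_nonneg _)]
    _ ≤ √(ρ ^ 2 - 1) * (|ρ| ^ n * ∑ t ∈ range n, |ε (t + 1) ω|) := by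
        gcongr
        exact abs_sum_pow_mul_le hρ (fun t ↦ ε t ω) n
    _ = |ρ| ^ n * (√(ρ ^ 2 - 1) * ∑ t ∈ range n, |ε (t + 1) ω|) := by ring
    _ ≤ |ρ| ^ n * exp (δ * n) := by gcongr

end AR1

/-- For the nonstationary AR(1) process `X_t = ρ X_{t-1} + √(ρ²-1) ε_t`, `X_0 = 0`,
with `|ρ| > 1` and i.i.d. `N(0,1)` noise, `(1/n) ln|X_n| → ln|ρ|` almost surely. -/
theorem ar1_nonstationary_lyapunov
    {Ω : Type*} [MeasurableSpace Ω] (P : Measure Ω) [IsProbabilityMeasure P]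
    (ρ : ℝ) (hρ : 1 < |ρ|) (X ε : ℕ → Ω → ℝ)
    (hindep : iIndepFun ε P)
    (hε : ∀ t : ℕ, 1 ≤ t → Measure.map (ε t) P = gaussianReal 0 1)
    (hX0 : X 0 = fun _ => 0)
    (hrec : ∀ t : ℕ, 1 ≤ t →
      X t = fun ω => ρ * X (t - 1) ω + Real.sqrt (ρ ^ 2 - 1) * ε t ω) :
    ∀ᵐ ω ∂P, Tendsto (fun n : ℕ => (1 / (n : ℝ)) * Real.log |X n ω|)
      atTop (nhds (Real.log |ρ|)) := by
  have hlaw : ∀ t, 1 ≤ t → HasLaw (ε t) (gaussianReal 0 1) P := fun t ht ↦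
    ⟨AEMeasurable.of_map_ne_zero (by rw [hε t ht]; exact IsProbabilityMeasure.ne_zero _), hε t ht⟩
  have hX : ∀ ω n, X n ω = ar1Sum ρ ε n ω := fun ω ↦
    eq_mul_sum_pow_of_recurrence (congrFun hX0 ω) fun t ht ↦ congrFun (hrec t ht) ω
  filter_upwards [ae_forall_eventually_le_abs_ar1Sum hindep hlaw hρ,
    ae_forall_eventually_abs_ar1Sum_le hindep hlaw hρ.le] with ω hlow hup
  simp_rw [hX ω]
  exact tendsto_inv_mul_log_of_bounds (one_pos.trans hρ) hlow hup
end

section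
/- Let v > 0, let m_v = (1/2)(ln v − ln 2 − γ), and let σ = π/(2√2) (so σ² = π²/8). The pushforward of the Gaussian measure N(0, v) on ℝ under the map y ↦ (ln|y| − m_v)/σ is the measure on ℝ with density g(x) = (1/2) √(π/2) exp( −(1/4) e^z + z/2 ) with respect to Lebesgue measure, where z = π x/√2 − γ. In particular this density does not depend on v. -/
/-!
The map `y ↦ (log |y| - m) / σ` is two-to-one, with inverse branches `x ↦ ± exp (σ x + m)`.
Changing variables on each branch and using that the Gaussian density `φ_v` is even, the
pushforward has density `2 σ u φ_v(u)` at `u = exp (σ x + m)`. For the chosen `m` and `σ` one has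
`u = √(v/2) e^{z/2}`, so `u² / (2v) = e^z / 4` and the factor `v` cancels.
-/

open MeasureTheory ProbabilityTheory Real Set Function
open scoped ENNReal NNReal

theorem map_withDensity_restrict_range_of_leftInverse {e e' T : ℝ → ℝ} {h : ℝ → ℝ≥0∞}
    (he : ∀ x, HasDerivAt e (e' x) x) (hTe : LeftInverse T e) (hT : Measurable T) :
    ((volume.restrict (range e)).withDensity h).map T
      = volume.withDensity fun x => ENNReal.ofReal |e' x| * h (e x) := by
  ext s hs
  have himage : T ⁻¹' s ∩ range e = e '' s := by
    ext y
    constructor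
    · rintro ⟨hy, x, rfl⟩
      exact ⟨x, by rwa [mem_preimage, hTe x] at hy, rfl⟩
    · rintro ⟨x, hx, rfl⟩
      exact ⟨by rwa [mem_preimage, hTe x], x, rfl⟩
  rw [Measure.map_apply hT hs, withDensity_apply _ (hT hs), withDensity_apply _ hs,
    Measure.restrict_restrict (hT hs), himage,
    lintegral_image_eq_lintegral_abs_deriv_mul hs (fun x _ => (he x).hasDerivWithinAt)
      (hTe.injective.injOn)]

theorem range_exp_mul_add {σ : ℝ} (hσ : σ ≠ 0) (m : ℝ) :
    range (fun x => exp (σ * x + m)) = Ioi 0 := by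
  refine Subset.antisymm (range_subset_iff.2 fun x => exp_pos _) fun y hy => ?_
  exact ⟨(log y - m) / σ, by simp only [mul_div_cancel₀ _ hσ, sub_add_cancel, exp_log hy]⟩

theorem range_neg_exp_mul_add {σ : ℝ} (hσ : σ ≠ 0) (m : ℝ) :
    range (fun x => -exp (σ * x + m)) = Iio 0 := by
  change range ((fun y => -y) ∘ fun x => exp (σ * x + m)) = _
  rw [range_comp, range_exp_mul_add hσ, image_neg_Ioi, neg_zero]

theorem leftInverse_log_abs_exp_mul_add {σ : ℝ} (hσ : σ ≠ 0) (m : ℝ) :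
    LeftInverse (fun y => (log |y| - m) / σ) fun x => exp (σ * x + m) := fun x => by
  simp only [abs_exp, log_exp, add_sub_cancel_right, mul_div_cancel_left₀ _ hσ]

theorem map_log_abs_withDensity_of_even {φ : ℝ → ℝ≥0∞} (hφm : Measurable φ)
    (hφ : ∀ y, φ (-y) = φ y) {σ : ℝ} (hσ : 0 < σ) (m : ℝ) :
    (volume.withDensity φ).map (fun y => (log |y| - m) / σ)
      = volume.withDensity fun x =>
          ENNReal.ofReal (2 * σ * exp (σ * x + m)) * φ (exp (σ * x + m)) := by
  set T : ℝ → ℝ := fun y => (log |y| - m) / σ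
  set e : ℝ → ℝ := fun x => exp (σ * x + m)
  have hT : Measurable T := ((measurable_log.comp measurable_abs).sub_const m).div_const σ
  have he (x : ℝ) : HasDerivAt e (exp (σ * x + m) * σ) x :=
    (((hasDerivAt_id x).const_mul σ).add_const m).exp.congr_deriv (by simp)
  have hTe : LeftInverse T e := leftInverse_log_abs_exp_mul_add hσ.ne' m
  have hTne : LeftInverse T fun x => -e x := fun x => by simpa [T] using hTe x
  have hsplit :
      (volume : Measure ℝ) = volume.restrict (range e) + volume.restrict (range fun x => -e x) := by
    rw [range_exp_mul_add hσ.ne', range_neg_exp_mul_add hσ.ne',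
      Measure.restrict_congr_set Iio_ae_eq_Iic, ← compl_Ioi,
      Measure.restrict_add_restrict_compl measurableSet_Ioi]
  conv_lhs => rw [hsplit]
  rw [withDensity_add_measure, Measure.map_add _ _ hT,
    map_withDensity_restrict_range_of_leftInverse he hTe hT,
    map_withDensity_restrict_range_of_leftInverse (e := fun x => -e x)
      (fun x => (he x).neg) hTne hT,
    ← withDensity_add_left (by fun_prop)]
  congr with x
  rw [Pi.add_apply, hφ, abs_neg, abs_of_pos (by positivity), ← add_mul,
    ← ENNReal.ofReal_add (by positivity) (by positivity)]
  congr 2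
  ring

theorem exp_add_half_log_sub_eq_sqrt_half_mul {v : ℝ} (hv : 0 < v) (c z : ℝ) :
    exp ((z + c) / 2 + (log v - log 2 - c) / 2) = √(v / 2) * exp (z / 2) := by
  rw [show (z + c) / 2 + (log v - log 2 - c) / 2 = log (v / 2) / 2 + z / 2 by
      rw [log_div hv.ne' two_ne_zero]; ring,
    exp_add, exp_half, exp_log (by positivity)]

theorem mul_gaussianPDFReal_sqrt_half_mul_exp {v : ℝ≥0} (hv : v ≠ 0) (z : ℝ) :
    √(v / 2) * exp (z / 2) * gaussianPDFReal 0 v (√(v / 2) * exp (z / 2))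
      = exp (-(1 / 4) * exp z + z / 2) / (2 * √π) := by
  have hv' : (0 : ℝ) < v := by positivity
  have hsq : (√(v / 2) * exp (z / 2) - 0) ^ 2 = v / 2 * exp z := by
    rw [sub_zero, mul_pow, sq_sqrt (by positivity), sq, ← exp_add, add_halves]
  rw [gaussianPDFReal, hsq, exp_add, sqrt_div' _ two_pos.le, sqrt_mul' _ hv'.le]
  have h2 : √2 * √2 = 2 := mul_self_sqrt two_pos.le
  field_simp
  rw [sqrt_mul zero_le_two, ← mul_assoc, h2]
  norm_num
  ring

/-- The pushforward of `N(0,v)` under `y ↦ (ln|y| - m_v)/σ`, where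
`m_v = (ln v - ln 2 - γ)/2` and `σ = π/(2√2)`, is the doubly exponential (Gumbel-type)
distribution with density `g(x) = (1/2)√(π/2) exp(-(1/4)e^z + z/2)`, `z = πx/√2 - γ`,
independently of `v`. -/
theorem map_log_abs_gaussian_eq_gumbel (v : NNReal) (hv : 0 < v) :
    Measure.map
      (fun y : ℝ => (Real.log |y|
          - (Real.log v - Real.log 2 - Real.eulerMascheroniConstant) / 2)
        / (Real.pi / (2 * Real.sqrt 2)))
      (gaussianReal 0 v)
    = volume.withDensity (fun x : ℝ => ENNReal.ofReal
        ((1 / 2) * Real.sqrt (Real.pi / 2)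
          * Real.exp (-(1 / 4) * Real.exp (Real.pi * x / Real.sqrt 2
              - Real.eulerMascheroniConstant)
            + (Real.pi * x / Real.sqrt 2 - Real.eulerMascheroniConstant) / 2))) := by
  set γ := eulerMascheroniConstant
  set σ := π / (2 * √2)
  have hσ : 0 < σ := by positivity
  have hσx (x : ℝ) : σ * x = (π * x / √2 - γ + γ) / 2 := by ring
  rw [gaussianReal_of_var_ne_zero 0 hv.ne',
    map_log_abs_withDensity_of_even (measurable_gaussianPDF 0 v)
      (fun y => by simp [gaussianPDF, gaussianPDFReal]) hσ]
  congr with x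
  rw [gaussianPDF, ← ENNReal.ofReal_mul (by positivity), hσx,
    exp_add_half_log_sub_eq_sqrt_half_mul (NNReal.coe_pos.2 hv), mul_assoc,
    mul_gaussianPDFReal_sqrt_half_mul_exp hv.ne', sqrt_div' _ zero_le_two]
  congr 1
  generalize exp _ = E
  simp only [σ]
  field_simp
  rw [sq_sqrt pi_pos.le, mul_comm]
end

section
/- Let g(x) = (1/2) √(π/2) exp( −(1/4) e^z + z/2 ) where z = π x/√2 − γ and γ is the Euler–Mascheroni constant. Then ∫_ℝ g(x) dx = 1, ∫_ℝ x g(x) dx = 0, and ∫_ℝ x² g(x) dx = 1; that is, g is a probability density with mean 0 and variance 1. -/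
/-
Substituting `u = exp z / 4`, i.e. `x = (√2 / π) (log u + γ + 2 log 2)`, turns `g x dx` into
the Gamma(1/2) law `exp (-u) u^(-1/2) du / √π`. Its logarithmic moments are derivatives of `Γ`
at `1/2`, obtained by differentiating the Gamma integral under the integral sign:
`Γ(1/2) = √π`, `Γ'(1/2) = -√π (γ + 2 log 2)`, and `Γ''(1/2) = √π ((γ + 2 log 2)² + π² / 2)`
from differentiating the reflection formula twice. So `log u` has mean `-(γ + 2 log 2)` and
variance `π² / 2`, which the affine change back to `x` turns into mean `0` and variance `1`.
-/

open MeasureTheory Real Set Filter Topology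

lemma abs_log_pow_le_rpow_add_rpow {u δ : ℝ} (hu : 0 < u) (hδ : 0 < δ) (m : ℕ) :
    |log u| ^ m ≤ (u ^ (-(δ * m)) + u ^ (δ * m)) / δ ^ m := by
  have hpow (c : ℝ) : (u ^ c) ^ m = u ^ (c * m) := by rw [← rpow_natCast, ← rpow_mul hu.le]
  rcases le_total 1 u with h | h
  · calc |log u| ^ m ≤ (u ^ δ / δ) ^ m := by
          rw [abs_of_nonneg (log_nonneg h)]
          gcongr
          · exact log_nonneg h
          · exact log_le_rpow_div hu.le hδ
      _ = u ^ (δ * m) / δ ^ m := by rw [div_pow, hpow]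
      _ ≤ _ := by gcongr; exact le_add_of_nonneg_left (by positivity)
  · calc |log u| ^ m = log u⁻¹ ^ m := by rw [log_inv, abs_of_nonpos (log_nonpos hu.le h)]
      _ ≤ (u⁻¹ ^ δ / δ) ^ m := by
          gcongr
          · exact log_nonneg (one_le_inv₀ hu |>.mpr h)
          · exact log_le_rpow_div (inv_nonneg.mpr hu.le) hδ
      _ = u ^ (-(δ * m)) / δ ^ m := by
          rw [inv_rpow hu.le, ← rpow_neg hu.le, div_pow, hpow, neg_mul]
      _ ≤ _ := by gcongr; exact le_add_of_nonneg_right (by positivity)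

lemma rpow_le_rpow_add_rpow {u a b t : ℝ} (hu : 0 < u) (ha : a ≤ t) (hb : t ≤ b) :
    u ^ t ≤ u ^ a + u ^ b := by
  rcases le_total 1 u with h | h
  · exact (rpow_le_rpow_of_exponent_le h hb).trans (le_add_of_nonneg_left (by positivity))
  · exact (rpow_le_rpow_of_exponent_ge hu h ha).trans (le_add_of_nonneg_right (by positivity))

lemma integrableOn_exp_neg_mul_rpow_mul_abs_log_pow {s : ℝ} (hs : 0 < s) (k : ℕ) :
    IntegrableOn (fun u ↦ exp (-u) * u ^ (s - 1) * |log u| ^ k) (Ioi 0) := by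
  set δ := s / (2 * (k + 1))
  have hδ : 0 < δ := by positivity
  have hδk : δ * k < s := by
    rw [div_mul_eq_mul_div, div_lt_iff₀ (by positivity)]
    nlinarith
  have hbound : IntegrableOn
      (fun u ↦ (exp (-u) * u ^ (s - δ * k - 1) + exp (-u) * u ^ (s + δ * k - 1)) / δ ^ k)
      (Ioi 0) :=
    ((GammaIntegral_convergent (by linarith)).add
      (GammaIntegral_convergent (by positivity))).div_const _
  refine hbound.mono' (by fun_prop : Measurable _).aestronglyMeasurable ?_
  filter_upwards [ae_restrict_mem measurableSet_Ioi] with u (hu : 0 < u)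
  rw [norm_of_nonneg (by positivity)]
  calc exp (-u) * u ^ (s - 1) * |log u| ^ k
      ≤ exp (-u) * u ^ (s - 1) * ((u ^ (-(δ * k)) + u ^ (δ * k)) / δ ^ k) := by
        gcongr; exact abs_log_pow_le_rpow_add_rpow hu hδ k
    _ = _ := by
        rw [show s - δ * k - 1 = (s - 1) + -(δ * k) by ring,
          show s + δ * k - 1 = (s - 1) + δ * k by ring, rpow_add hu, rpow_add hu]
        ring

lemma integrableOn_exp_neg_mul_rpow_mul_log_pow {s : ℝ} (hs : 0 < s) (k : ℕ) :
    IntegrableOn (fun u ↦ exp (-u) * u ^ (s - 1) * log u ^ k) (Ioi 0) := by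
  refine (integrableOn_exp_neg_mul_rpow_mul_abs_log_pow hs k).mono'
    (by fun_prop : Measurable _).aestronglyMeasurable ?_
  filter_upwards [ae_restrict_mem measurableSet_Ioi] with u (hu : 0 < u)
  rw [norm_mul, norm_pow, norm_of_nonneg (by positivity), norm_eq_abs]

noncomputable def gammaLogMoment (k : ℕ) (s : ℝ) : ℝ :=
  ∫ u in Ioi 0, exp (-u) * u ^ (s - 1) * log u ^ k

lemma hasDerivAt_gammaLogMoment {s : ℝ} (hs : 0 < s) (k : ℕ) :
    HasDerivAt (gammaLogMoment k) (gammaLogMoment (k + 1) s) s := by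
  have hF (u : ℝ) (hu : 0 < u) (t : ℝ) : HasDerivAt (fun t ↦ exp (-u) * u ^ (t - 1) * log u ^ k)
      (exp (-u) * u ^ (t - 1) * log u ^ (k + 1)) t := by
    have := (((hasStrictDerivAt_const_rpow hu (t - 1)).hasDerivAt.comp t
      ((hasDerivAt_id t).sub_const 1)).const_mul (exp (-u))).mul_const (log u ^ k)
    exact this.congr_deriv (by ring)
  refine (hasDerivAt_integral_of_dominated_loc_of_deriv_le (μ := volume.restrict (Ioi 0))
    (F := fun t u ↦ exp (-u) * u ^ (t - 1) * log u ^ k)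
    (F' := fun t u ↦ exp (-u) * u ^ (t - 1) * log u ^ (k + 1))
    (bound := fun u ↦ exp (-u) * u ^ (s / 2 - 1) * |log u| ^ (k + 1)
      + exp (-u) * u ^ (3 * s / 2 - 1) * |log u| ^ (k + 1))
    (Metric.ball_mem_nhds s (half_pos hs))
    (.of_forall fun _ ↦ (by fun_prop : Measurable _).aestronglyMeasurable)
    (integrableOn_exp_neg_mul_rpow_mul_log_pow hs k)
    (by fun_prop : Measurable _).aestronglyMeasurable
    ?_ ((integrableOn_exp_neg_mul_rpow_mul_abs_log_pow (half_pos hs) (k + 1)).add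
      (integrableOn_exp_neg_mul_rpow_mul_abs_log_pow (by positivity) (k + 1))) ?_).2
  · filter_upwards [ae_restrict_mem measurableSet_Ioi] with u (hu : 0 < u) t ht
    rw [Metric.mem_ball, dist_eq, abs_lt] at ht
    rw [norm_mul, norm_mul, norm_pow, norm_of_nonneg (exp_pos _).le,
      norm_of_nonneg (rpow_pos_of_pos hu _).le, norm_eq_abs, ← add_mul, ← mul_add]
    gcongr
    exact rpow_le_rpow_add_rpow hu (by linarith) (by linarith)
  · filter_upwards [ae_restrict_mem measurableSet_Ioi] with u (hu : 0 < u) t _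
    exact hF u hu t

lemma gammaLogMoment_zero {s : ℝ} (hs : 0 < s) : gammaLogMoment 0 s = Gamma s := by
  simp [gammaLogMoment, Gamma_eq_integral hs]

lemma hasDerivAt_Gamma_gammaLogMoment {s : ℝ} (hs : 0 < s) :
    HasDerivAt Gamma (gammaLogMoment 1 s) s :=
  (hasDerivAt_gammaLogMoment hs 0).congr_of_eventuallyEq <|
    eventually_of_mem (Ioi_mem_nhds hs) fun _ ht ↦ (gammaLogMoment_zero ht).symm

lemma gammaLogMoment_one_one_half :
    gammaLogMoment 1 (1 / 2) = -√π * (eulerMascheroniConstant + 2 * log 2) :=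
  (hasDerivAt_Gamma_gammaLogMoment one_half_pos).unique hasDerivAt_Gamma_one_half

lemma integral_exp_neg_mul_rpow_mul_quadratic_log {s : ℝ} (hs : 0 < s) (p q r : ℝ) :
    ∫ u in Ioi 0, exp (-u) * u ^ (s - 1) * (p * log u ^ 2 + q * log u + r)
      = p * gammaLogMoment 2 s + q * gammaLogMoment 1 s + r * Gamma s := by
  have hf (k : ℕ) := integrableOn_exp_neg_mul_rpow_mul_log_pow hs k
  calc _ = ∫ u in Ioi 0, p * (exp (-u) * u ^ (s - 1) * log u ^ 2)
        + q * (exp (-u) * u ^ (s - 1) * log u ^ 1) + r * (exp (-u) * u ^ (s - 1) * log u ^ 0) := by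
        congr with u
        ring
    _ = _ := by
        rw [integral_add ?_ ((hf 0).const_mul r),
          integral_add ((hf 2).const_mul p) ((hf 1).const_mul q), integral_const_mul,
          integral_const_mul, integral_const_mul, ← gammaLogMoment_zero hs]
        · rfl
        · exact ((hf 2).const_mul p).add ((hf 1).const_mul q)

lemma hasDerivAt_pi_div_sin_pi_mul_s13 {s : ℝ} (hs : sin (π * s) ≠ 0) :
    HasDerivAt (fun t ↦ π / sin (π * t)) (-(π ^ 2 * cos (π * s)) / sin (π * s) ^ 2) s := by
  have := (hasDerivAt_const s π).div ((hasDerivAt_id s).const_mul π).sin hs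
  exact this.congr_deriv (by simp only [id_eq, zero_mul, mul_one, zero_sub]; ring)

lemma hasDerivAt_deriv_pi_div_sin_pi_mul_one_half :
    HasDerivAt (fun t ↦ -(π ^ 2 * cos (π * t)) / sin (π * t) ^ 2) (π ^ 3) (1 / 2) := by
  have hsin : sin (π * (1 / 2)) = 1 := by rw [mul_one_div, sin_pi_div_two]
  have hcos : cos (π * (1 / 2)) = 0 := by rw [mul_one_div, cos_pi_div_two]
  have hlin := (hasDerivAt_id (1 / 2 : ℝ)).const_mul π
  have h := (hlin.cos.const_mul (π ^ 2)).neg.div (hlin.sin.pow 2)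
    (by simp only [Pi.pow_apply, id, hsin]; norm_num)
  exact h.congr_deriv (by simp only [Pi.pow_apply, Pi.neg_apply, id, mul_one, hsin, hcos]; ring)

lemma hasDerivAt_Gamma_mul_Gamma_one_sub {s : ℝ} (hs : s ∈ Ioo 0 1) :
    HasDerivAt (fun t ↦ Gamma t * Gamma (1 - t))
      (gammaLogMoment 1 s * Gamma (1 - s) - Gamma s * gammaLogMoment 1 (1 - s)) s := by
  have := (hasDerivAt_Gamma_gammaLogMoment hs.1).mul
    ((hasDerivAt_Gamma_gammaLogMoment (sub_pos.2 hs.2)).comp_const_sub 1 s)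
  exact this.congr_deriv (by ring)

lemma hasDerivAt_deriv_Gamma_mul_Gamma_one_sub {s : ℝ} (hs : s ∈ Ioo 0 1) :
    HasDerivAt (fun t ↦ gammaLogMoment 1 t * Gamma (1 - t) - Gamma t * gammaLogMoment 1 (1 - t))
      (gammaLogMoment 2 s * Gamma (1 - s) - 2 * gammaLogMoment 1 s * gammaLogMoment 1 (1 - s)
        + Gamma s * gammaLogMoment 2 (1 - s)) s := by
  have h1 := hasDerivAt_gammaLogMoment hs.1 1
  have h1' := (hasDerivAt_gammaLogMoment (sub_pos.2 hs.2) 1).comp_const_sub 1 s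
  have hΓ := hasDerivAt_Gamma_gammaLogMoment hs.1
  have hΓ' := (hasDerivAt_Gamma_gammaLogMoment (sub_pos.2 hs.2)).comp_const_sub 1 s
  exact ((h1.mul hΓ').sub (hΓ.mul h1')).congr_deriv (by ring)

lemma gammaLogMoment_two_one_half :
    gammaLogMoment 2 (1 / 2) = √π * ((eulerMascheroniConstant + 2 * log 2) ^ 2 + π ^ 2 / 2) := by
  have hmem : (1 / 2 : ℝ) ∈ Ioo 0 1 := by norm_num
  have hderiv : (fun t ↦ gammaLogMoment 1 t * Gamma (1 - t) - Gamma t * gammaLogMoment 1 (1 - t))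
      =ᶠ[𝓝 (1 / 2)] fun t ↦ -(π ^ 2 * cos (π * t)) / sin (π * t) ^ 2 := by
    filter_upwards [Ioo_mem_nhds hmem.1 hmem.2] with t ht
    have hsin : sin (π * t) ≠ 0 :=
      (sin_pos_of_pos_of_lt_pi (by nlinarith [pi_pos, ht.1]) (by nlinarith [pi_pos, ht.2])).ne'
    refine (hasDerivAt_Gamma_mul_Gamma_one_sub ht).unique ?_
    simpa only [Gamma_mul_Gamma_one_sub] using hasDerivAt_pi_div_sin_pi_mul_s13 hsin
  have h := (hasDerivAt_deriv_Gamma_mul_Gamma_one_sub hmem).congr_of_eventuallyEq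
    hderiv.symm |>.unique hasDerivAt_deriv_pi_div_sin_pi_mul_one_half
  norm_num only [gammaLogMoment_one_one_half, Gamma_one_half_eq] at h
  have hsq : √π * √π = π := mul_self_sqrt pi_pos.le
  refine mul_left_cancel₀ (mul_ne_zero two_ne_zero (sqrt_pos.2 pi_pos).ne') ?_
  linear_combination h - π ^ 2 * hsq

lemma integral_Ioi_eq_integral_comp_exp_mul_add {E : Type*} [NormedAddCommGroup E]
    [NormedSpace ℝ E] {a : ℝ} (ha : 0 < a) (b : ℝ) (G : ℝ → E) :
    ∫ u in Ioi 0, G u = ∫ x, (a * exp (a * x + b)) • G (exp (a * x + b)) := by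
  have hderiv (x : ℝ) (_ : x ∈ univ) :
      HasDerivWithinAt (fun x ↦ exp (a * x + b)) (a * exp (a * x + b)) univ x :=
    ((((hasDerivAt_id x).const_mul a).add_const b).exp.congr_deriv
      (by simp [mul_comm])).hasDerivWithinAt
  have hinj : InjOn (fun x ↦ exp (a * x + b)) univ := fun x _ y _ h ↦ by
    simpa [ha.ne'] using exp_injective h
  have himage : (fun x ↦ exp (a * x + b)) '' univ = Ioi 0 := by
    refine Subset.antisymm (by rintro _ ⟨x, -, rfl⟩; exact exp_pos _) fun u (hu : 0 < u) ↦ ?_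
    refine ⟨(log u - b) / a, trivial, ?_⟩
    simp only [mul_div_cancel₀ _ ha.ne', sub_add_cancel, exp_log hu]
  rw [← himage, integral_image_eq_integral_abs_deriv_smul MeasurableSet.univ hderiv hinj,
    setIntegral_univ]
  simp_rw [abs_of_pos (mul_pos ha (exp_pos _))]

noncomputable def gumbelDensity (x : ℝ) : ℝ :=
  (1 / 2) * √(π / 2) * exp (-(1 / 4) * exp (π * x / √2 - eulerMascheroniConstant)
    + (π * x / √2 - eulerMascheroniConstant) / 2)

lemma gumbelDensity_eq (x : ℝ) :
    gumbelDensity x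
      = (√π)⁻¹ * (π / √2 * exp (π / √2 * x + -(eulerMascheroniConstant + 2 * log 2)))
      * (exp (-exp (π / √2 * x + -(eulerMascheroniConstant + 2 * log 2)))
        * exp (π / √2 * x + -(eulerMascheroniConstant + 2 * log 2)) ^ ((1 / 2 : ℝ) - 1)) := by
  have hlog4 : log 4 = 2 * log 2 := by
    rw [show (4 : ℝ) = 2 ^ 2 by norm_num, log_pow]; push_cast; ring
  rw [gumbelDensity, show π / √2 * x + -(eulerMascheroniConstant + 2 * log 2)
    = π * x / √2 - eulerMascheroniConstant - log 4 by rw [hlog4]; ring]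
  generalize π * x / √2 - eulerMascheroniConstant = z
  have hexp : exp (z - log 4) * (exp (-exp (z - log 4)) * exp (z - log 4) ^ ((1 / 2 : ℝ) - 1))
      = exp (-(1 / 4) * exp z + z / 2) / 2 := by
    rw [← exp_mul, ← exp_add, ← exp_add, exp_sub z (log 4), exp_log four_pos,
      show z - log 4 + (-(exp z / 4) + (z - log 4) * (1 / 2 - 1))
        = -(1 / 4) * exp z + z / 2 - log 2 by rw [hlog4]; ring,
      exp_sub, exp_log two_pos]
  rw [mul_assoc (√π)⁻¹, mul_assoc (π / √2), hexp, sqrt_div pi_pos.le]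
  field_simp
  rw [sq_sqrt pi_pos.le]

lemma integral_mul_gumbelDensity (F : ℝ → ℝ) :
    ∫ x, F x * gumbelDensity x = (√π)⁻¹ * ∫ u in Ioi 0, exp (-u) * u ^ ((1 / 2 : ℝ) - 1)
      * F (√2 / π * (log u + (eulerMascheroniConstant + 2 * log 2))) := by
  rw [integral_Ioi_eq_integral_comp_exp_mul_add (div_pos pi_pos (sqrt_pos.2 two_pos))
    (-(eulerMascheroniConstant + 2 * log 2)), ← integral_const_mul]
  congr with x
  have hx : √2 / π * (π / √2 * x + -(eulerMascheroniConstant + 2 * log 2)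
      + (eulerMascheroniConstant + 2 * log 2)) = x := by
    field_simp
    ring
  rw [log_exp, hx, gumbelDensity_eq, smul_eq_mul]
  ring

lemma integral_quadratic_mul_gumbelDensity (p q r : ℝ) :
    ∫ x, (p * x ^ 2 + q * x + r) * gumbelDensity x = p + r := by
  set c := eulerMascheroniConstant + 2 * log 2
  set σ := √2 / π
  have hσ : σ ^ 2 * π ^ 2 = 2 := by
    rw [div_pow, sq_sqrt zero_le_two, div_mul_cancel₀ _ (pow_ne_zero 2 pi_ne_zero)]
  calc ∫ x, (p * x ^ 2 + q * x + r) * gumbelDensity x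
      = (√π)⁻¹ * ∫ u in Ioi 0, exp (-u) * u ^ ((1 / 2 : ℝ) - 1) * (p * σ ^ 2 * log u ^ 2
          + (2 * p * σ ^ 2 * c + q * σ) * log u + (p * σ ^ 2 * c ^ 2 + q * σ * c + r)) := by
        rw [integral_mul_gumbelDensity]
        congr with u
        ring
    _ = p + r := by
        rw [integral_exp_neg_mul_rpow_mul_quadratic_log one_half_pos, gammaLogMoment_two_one_half,
          gammaLogMoment_one_one_half, Gamma_one_half_eq]
        field_simp
        linear_combination p * hσ

/-- The doubly exponential density `g(x) = (1/2)√(π/2) exp(-(1/4)e^z + z/2)`,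
`z = πx/√2 - γ`, is a probability density with mean `0` and variance `1`. -/
theorem gumbel_density_moments :
    (∫ x : ℝ, (1 / 2) * Real.sqrt (Real.pi / 2)
        * Real.exp (-(1 / 4) * Real.exp (Real.pi * x / Real.sqrt 2
            - Real.eulerMascheroniConstant)
          + (Real.pi * x / Real.sqrt 2 - Real.eulerMascheroniConstant) / 2) = 1)
    ∧ (∫ x : ℝ, x * ((1 / 2) * Real.sqrt (Real.pi / 2)
        * Real.exp (-(1 / 4) * Real.exp (Real.pi * x / Real.sqrt 2
            - Real.eulerMascheroniConstant)
          + (Real.pi * x / Real.sqrt 2 - Real.eulerMascheroniConstant) / 2)) = 0)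
    ∧ (∫ x : ℝ, x ^ 2 * ((1 / 2) * Real.sqrt (Real.pi / 2)
        * Real.exp (-(1 / 4) * Real.exp (Real.pi * x / Real.sqrt 2
            - Real.eulerMascheroniConstant)
          + (Real.pi * x / Real.sqrt 2 - Real.eulerMascheroniConstant) / 2)) = 1) := by
  change (∫ x, gumbelDensity x) = 1 ∧ (∫ x, x * gumbelDensity x) = 0
    ∧ (∫ x, x ^ 2 * gumbelDensity x) = 1
  refine ⟨?_, ?_, ?_⟩
  · simpa using integral_quadratic_mul_gumbelDensity 0 0 1
  · simpa using integral_quadratic_mul_gumbelDensity 0 1 0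
  · simpa using integral_quadratic_mul_gumbelDensity 1 0 0
end
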